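/- arXiv:1907.10160 — 5 statements merged into one kernel-verified Lean document; each statement's English description precedes it below -/
import Mathlib

section
/- Let α, β > 0 with αβ > 1, and define δ = (√(αβ) − 1)/(√(αβ) + β) and γ̃ = (√(αβ) − 1)²/(1 + β). Then for the function L(w) = log(1 − w) + α·log(w + β⁻¹) − γ̃·log(w), defined on complex w avoiding the branch points, the derivative satisfies L′(w) = (α + 1 − γ̃)(w − δ)² / ((w + β⁻¹)(w − 1)w). In particular, δ is a double critical point of L. -/
/-- The derivative of `L(w) = log(1-w) + α log(w + β⁻¹) - γ̃ log w` is
`(α + 1 - γ̃)(w - δ)² / ((w + β⁻¹)(w - 1)w)`, viewed on real `w ∈ (0,1)`;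
in particular `δ` is a double critical point. -/
theorem L_deriv_formula (α β : ℝ) (hα : 0 < α) (hβ : 0 < β) (hαβ : 1 < α * β)
    (δ γ' : ℝ) (hδ : δ = (Real.sqrt (α * β) - 1) / (Real.sqrt (α * β) + β))
    (hγ : γ' = (Real.sqrt (α * β) - 1) ^ 2 / (1 + β))
    (L : ℝ → ℝ)
    (hL : ∀ w ∈ Set.Ioo (0 : ℝ) 1,
      L w = Real.log (1 - w) + α * Real.log (w + β⁻¹) - γ' * Real.log w) :
    (∀ w ∈ Set.Ioo (0 : ℝ) 1,
      HasDerivAt L ((α + 1 - γ') * (w - δ) ^ 2 / ((w + β⁻¹) * (w - 1) * w)) w)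
    ∧ HasDerivAt L 0 δ := by
  set s := Real.sqrt (α * β) with hs
  have hs2 : s ^ 2 = α * β := Real.sq_sqrt (by positivity)
  have hs1 : 1 < s := by nlinarith [Real.sqrt_nonneg (α * β)]
  have hsβ : 0 < s + β := by linarith
  have hα' : α = s ^ 2 / β := by field_simp [hs2]; linarith [hs2]
  have hδ0 : 0 < δ := by rw [hδ]; exact div_pos (by linarith) hsβ
  have hδ1 : δ < 1 := by
    rw [hδ, div_lt_one hsβ]; linarith
  have main : ∀ w ∈ Set.Ioo (0 : ℝ) 1,
      HasDerivAt L ((α + 1 - γ') * (w - δ) ^ 2 / ((w + β⁻¹) * (w - 1) * w)) w := by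
    intro w hw
    obtain ⟨hw0, hw1⟩ := hw
    have hwb : 0 < w + β⁻¹ := by positivity
    have h1w : (0:ℝ) < 1 - w := by linarith
    have h1 : HasDerivAt (fun w => Real.log (1 - w)) ((1 - w)⁻¹ * (-1)) w := by
      have := (Real.hasDerivAt_log (ne_of_gt h1w)).comp w
        ((hasDerivAt_id w).const_sub 1)
      simpa [Function.comp_def] using this
    have h2 : HasDerivAt (fun w => Real.log (w + β⁻¹)) ((w + β⁻¹)⁻¹ * 1) w := by
      have := (Real.hasDerivAt_log (ne_of_gt hwb)).comp w
        ((hasDerivAt_id w).add_const β⁻¹)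
      simpa [Function.comp_def] using this
    have h3 : HasDerivAt Real.log w⁻¹ w := Real.hasDerivAt_log (ne_of_gt hw0)
    have hg : HasDerivAt
        (fun w => Real.log (1 - w) + α * Real.log (w + β⁻¹) - γ' * Real.log w)
        ((1 - w)⁻¹ * (-1) + α * ((w + β⁻¹)⁻¹ * 1) - γ' * w⁻¹) w :=
      (h1.add (h2.const_mul α)).sub (h3.const_mul γ')
    have heq : (1 - w)⁻¹ * (-1) + α * ((w + β⁻¹)⁻¹ * 1) - γ' * w⁻¹
        = (α + 1 - γ') * (w - δ) ^ 2 / ((w + β⁻¹) * (w - 1) * w) := by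
      rw [hγ, hδ, hα']
      have hw1' : w - 1 ≠ 0 := by intro h; linarith [sub_eq_zero.mp h]
      have h1w' : (1:ℝ) - w ≠ 0 := ne_of_gt h1w
      have hβ' : (1:ℝ) + β ≠ 0 := by positivity
      field_simp
      ring
    rw [heq] at hg
    exact hg.congr_of_eventuallyEq <|
      Filter.eventuallyEq_of_mem (isOpen_Ioo.mem_nhds ⟨hw0, hw1⟩) hL
  refine ⟨main, ?_⟩
  have := main δ ⟨hδ0, hδ1⟩
  simpa using this
end

section
/- Let δ > 0, β > 0 and let w be a complex number with positive imaginary part. Define A(z) = π − Arg(z). Then Arg(w + β⁻¹) + 2·A(w − δ) ≤ π if and only if |w + β⁻¹| ≤ δ + β⁻¹. -/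
open Real

lemma sin_le_sin_iff_aux {α β : ℝ} (hα0 : 0 < α) (hαπ : α < π) (hβl : -π < β)
    (hβπ : β < π) (hsum : α + β < π) : Real.sin α ≤ Real.sin β ↔ α ≤ β := by
  have hcos : 0 < Real.cos ((β + α) / 2) := by
    exact Real.cos_pos_of_mem_Ioo ⟨by linarith, by linarith⟩
  have hkey : Real.sin β - Real.sin α = 2 * Real.sin ((β - α)/2) * Real.cos ((β + α)/2) :=
    Real.sin_sub_sin β α
  constructor
  · intro h
    by_contra hle
    push_neg at hle
    have hs : Real.sin ((β - α)/2) < 0 :=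
      Real.sin_neg_of_neg_of_neg_pi_lt (by linarith) (by linarith)
    nlinarith [mul_neg_of_neg_of_pos hs hcos]
  · intro h
    have hs : 0 ≤ Real.sin ((β - α)/2) :=
      Real.sin_nonneg_of_nonneg_of_le_pi (by linarith) (by linarith [Real.pi_pos])
    nlinarith [mul_nonneg hs hcos.le]

/-- For `w` in the upper half-plane, with `A(z) = π - Arg(z)`:
`Arg(w + β⁻¹) + 2·A(w - δ) ≤ π` iff `|w + β⁻¹| ≤ δ + β⁻¹`. -/
theorem arg_angle_criterion (δ β : ℝ) (hδ : 0 < δ) (hβ : 0 < β)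
    (w : ℂ) (hw : 0 < w.im) :
    Complex.arg (w + (β⁻¹ : ℝ)) + 2 * (π - Complex.arg (w - (δ : ℝ))) ≤ π ↔
      ‖w + (β⁻¹ : ℝ)‖ ≤ δ + β⁻¹ := by
  have ha0 : (0:ℝ) < β⁻¹ := inv_pos.mpr hβ
  set z₁ : ℂ := w + ((β⁻¹ : ℝ) : ℂ) with hz₁
  set z₂ : ℂ := w - ((δ : ℝ) : ℂ) with hz₂
  have him₁ : z₁.im = w.im := by simp [hz₁]
  have him₂ : z₂.im = w.im := by simp [hz₂]
  have hz₁0 : z₁ ≠ 0 := fun h => by rw [h] at him₁; simp at him₁; linarith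
  have hz₂0 : z₂ ≠ 0 := fun h => by rw [h] at him₂; simp at him₂; linarith
  have hr₁ : 0 < ‖z₁‖ := norm_pos_iff.mpr hz₁0
  have hr₂ : 0 < ‖z₂‖ := norm_pos_iff.mpr hz₂0
  set θ := Complex.arg z₁ with hθ
  set ψ := Complex.arg z₂ with hψ
  have hsθ : ‖z₁‖ * Real.sin θ = w.im := by
    rw [hθ, Complex.norm_mul_sin_arg, him₁]
  have hsψ : ‖z₂‖ * Real.sin ψ = w.im := by
    rw [hψ, Complex.norm_mul_sin_arg, him₂]
  have hsinθ : 0 < Real.sin θ := by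
    have := hsθ; nlinarith
  have hsinψ : 0 < Real.sin ψ := by
    have := hsψ; nlinarith
  have hθ0 : 0 < θ := by
    by_contra h
    push_neg at h
    have := Real.sin_nonpos_of_nonpos_of_neg_pi_le h (Complex.neg_pi_lt_arg z₁).le
    linarith
  have hψ0 : 0 < ψ := by
    by_contra h
    push_neg at h
    have := Real.sin_nonpos_of_nonpos_of_neg_pi_le h (Complex.neg_pi_lt_arg z₂).le
    linarith
  have hθπ : θ < π := lt_of_le_of_ne (Complex.arg_le_pi z₁)
    (fun h => by rw [h, Real.sin_pi] at hsinθ; linarith)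
  have hψπ : ψ < π := lt_of_le_of_ne (Complex.arg_le_pi z₂)
    (fun h => by rw [h, Real.sin_pi] at hsinψ; linarith)
  have hcθ : ‖z₁‖ * Real.cos θ = z₁.re := Complex.norm_mul_cos_arg z₁
  have hcψ : ‖z₂‖ * Real.cos ψ = z₂.re := Complex.norm_mul_cos_arg z₂
  have hre : z₁.re - z₂.re = δ + β⁻¹ := by
    simp [hz₁, hz₂]; ring
  have key : ‖z₁‖ ≤ δ + β⁻¹ ↔ Real.sin (π - ψ) ≤ Real.sin (ψ - θ) := by
    rw [Real.sin_pi_sub, Real.sin_sub]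
    have hsum : δ + β⁻¹ = ‖z₁‖ * Real.cos θ - ‖z₂‖ * Real.cos ψ := by
      rw [hcθ, hcψ, hre]
    rw [hsum]
    have h1 : ‖z₁‖ * (Real.sin θ * Real.sin ψ) = w.im * Real.sin ψ := by
      rw [← mul_assoc, hsθ]
    have h2 : (‖z₁‖ * Real.cos θ - ‖z₂‖ * Real.cos ψ) *
        (Real.sin θ * Real.sin ψ) =
        w.im * (Real.sin ψ * Real.cos θ - Real.cos ψ * Real.sin θ) := by
      linear_combination (Real.cos θ * Real.sin ψ) * hsθ - (Real.cos ψ * Real.sin θ) * hsψ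
    constructor
    · intro h
      have h3 := mul_le_mul_of_nonneg_right h (mul_pos hsinθ hsinψ).le
      rw [h1, h2] at h3
      exact (mul_le_mul_iff_right₀ hw).mp h3
    · intro h
      have h3 := (mul_le_mul_iff_right₀ hw).mpr h
      rw [← h1, ← h2] at h3
      exact le_of_mul_le_mul_right h3 (mul_pos hsinθ hsinψ)
  have final : Real.sin (π - ψ) ≤ Real.sin (ψ - θ) ↔ π - ψ ≤ ψ - θ := by
    apply sin_le_sin_iff_aux <;> linarith
  rw [key, final]
  constructor <;> intro h <;> linarith
end

section
/- Let W : ℕ × ℕ → ℝ be a nonnegative array and fix m, n ∈ ℕ. For k ≤ min(m,n) let L_k denote the maximal total weight of k disjoint up-right lattice paths in the grid [1,m]×[1,n], where the p-th path goes from (1,p) to (m, n−k+p), and set L_0 = 0. Then the increments are nonincreasing in k: for all 1 ≤ k < min(m,n), L_{k+1} − L_k ≤ L_k − L_{k−1}. -/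
/-- A minimal-length up-right lattice path from `a` to `b`: each step increases
exactly one coordinate by 1. -/
def IsUpRightPath (p : List (ℕ × ℕ)) (a b : ℕ × ℕ) : Prop :=
  p.head? = some a ∧ p.getLast? = some b ∧
  List.Chain' (fun u v : ℕ × ℕ =>
    (v.1 = u.1 + 1 ∧ v.2 = u.2) ∨ (v.1 = u.1 ∧ v.2 = u.2 + 1)) p

/-- The set of total weights of `k`-tuples of pairwise disjoint up-right paths,
the `p`-th path going from `(1,p)` to `(m, n-k+p)`. -/
def LPPValues (W : ℕ × ℕ → ℝ) (m n k : ℕ) : Set ℝ :=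
  {x | ∃ π : Fin k → List (ℕ × ℕ),
    (∀ i : Fin k, IsUpRightPath (π i) (1, i.1 + 1) (m, n - k + i.1 + 1)) ∧
    (∀ i j : Fin k, i ≠ j → ∀ u ∈ π i, u ∉ π j) ∧
    x = ∑ i : Fin k, ((π i).map W).sum}

namespace LPPAux

def UpStep (u v : ℕ × ℕ) : Prop :=
  (v.1 = u.1 + 1 ∧ v.2 = u.2) ∨ (v.1 = u.1 ∧ v.2 = u.2 + 1)

lemma isUpRightPath_iff (p : List (ℕ × ℕ)) (a b : ℕ × ℕ) :
    IsUpRightPath p a b ↔ p.head? = some a ∧ p.getLast? = some b ∧ List.Chain' UpStep p :=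
  Iff.rfl

/-- The vertical segment of a path in column `x`, from row `y1` to row `y2`. -/
def colSeg (x y1 y2 : ℕ) : List (ℕ × ℕ) :=
  (List.range (y2 + 1 - y1)).map (fun j => (x, y1 + j))

lemma colSeg_single (x y : ℕ) : colSeg x y y = [(x, y)] := by
  unfold colSeg
  rw [show y + 1 - y = 1 by omega, show List.range 1 = [0] from rfl]
  simp

lemma colSeg_cons {y1 y2 : ℕ} (h : y1 ≤ y2) (x : ℕ) :
    colSeg x y1 y2 = (x, y1) :: colSeg x (y1 + 1) y2 := by
  unfold colSeg
  rw [show y2 + 1 - y1 = (y2 + 1 - (y1 + 1)) + 1 by omega, List.range_succ_eq_map]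
  simp only [List.map_cons, List.map_map, Nat.add_zero]
  congr 1
  apply List.map_congr_left
  intro j _
  simp only [Function.comp_apply, Nat.succ_eq_add_one]
  congr 1
  omega

lemma colSeg_snoc {y1 y2 : ℕ} (h : y1 ≤ y2 + 1) (x : ℕ) :
    colSeg x y1 (y2 + 1) = colSeg x y1 y2 ++ [(x, y2 + 1)] := by
  unfold colSeg
  rw [show y2 + 1 + 1 - y1 = (y2 + 1 - y1) + 1 by omega, List.range_succ, List.map_append]
  simp; omega

lemma colSeg_ne_nil {y1 y2 : ℕ} (h : y1 ≤ y2) (x : ℕ) : colSeg x y1 y2 ≠ [] := by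
  rw [colSeg_cons h]; simp

lemma colSeg_head? {y1 y2 : ℕ} (h : y1 ≤ y2) (x : ℕ) :
    (colSeg x y1 y2).head? = some (x, y1) := by
  rw [colSeg_cons h]; rfl

lemma colSeg_getLast? {y1 y2 : ℕ} (h : y1 ≤ y2) (x : ℕ) :
    (colSeg x y1 y2).getLast? = some (x, y2) := by
  unfold colSeg
  rw [show y2 + 1 - y1 = (y2 - y1) + 1 by omega, List.range_succ, List.map_append,
    List.map_cons, List.map_nil, List.getLast?_concat]
  congr 2
  omega

lemma chain'_colSeg (x y1 y2 : ℕ) : List.Chain' UpStep (colSeg x y1 y2) := by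
  rcases le_or_gt y1 y2 with h | h
  · obtain ⟨d, rfl⟩ : ∃ d, y2 = y1 + d := ⟨y2 - y1, by omega⟩
    clear h
    induction d with
    | zero => simp [colSeg_single, List.Chain']
    | succ d ih =>
      rw [show y1 + (d + 1) = (y1 + d) + 1 by omega, colSeg_snoc (by omega)]
      show List.IsChain _ _; rw [List.isChain_append]
      refine ⟨ih, List.isChain_singleton _, ?_⟩
      intro u hu v hv
      rw [colSeg_getLast? (by omega)] at hu
      simp at hu hv
      subst hu; subst hv
      right; exact ⟨rfl, rfl⟩
  · unfold colSeg
    rw [show y2 + 1 - y1 = 0 by omega]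
    simp [List.Chain']

lemma mem_colSeg {y1 y2 : ℕ} (x a b: ℕ) :
    (a, b) ∈ colSeg x y1 y2 ↔ a = x ∧ y1 ≤ b ∧ b ≤ y2 := by
  unfold colSeg
  simp only [List.mem_map, List.mem_range, Prod.mk.injEq]
  constructor
  · rintro ⟨j, hj, rfl, rfl⟩; omega
  · rintro ⟨rfl, h1, h2⟩; exact ⟨b - y1, by omega, rfl, by omega⟩

lemma sum_list_range {M : Type*} [AddCommMonoid M] (f : ℕ → M) (n : ℕ) :
    ((List.range n).map f).sum = ∑ i ∈ Finset.range n, f i := by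
  induction n with
  | zero => simp
  | succ n ih => rw [List.range_succ, Finset.sum_range_succ, List.map_append]; simp [ih]

lemma sum_colSeg (W : ℕ × ℕ → ℝ) (x y1 y2 : ℕ) :
    ((colSeg x y1 y2).map W).sum = ∑ y ∈ Finset.Icc y1 y2, W (x, y) := by
  unfold colSeg
  rw [List.map_map, sum_list_range, ← Finset.Ico_add_one_right_eq_Icc, Finset.sum_Ico_eq_sum_range]
  rfl

/-- The up-right path with height profile `b`, starting in column `x0` at `(x0, b (x0-1))`,
ending at `(m, b m)`. In column `x` it occupies rows `b (x-1)` to `b x`. -/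
def pathOfFrom (x0 : ℕ) (b : ℕ → ℕ) (m : ℕ) : List (ℕ × ℕ) :=
  ((List.range (m + 1 - x0)).map
    (fun i => colSeg (x0 + i) (b (x0 + i - 1)) (b (x0 + i)))).flatten

lemma pathOfFrom_empty {x0 m : ℕ} (h : m < x0) (b : ℕ → ℕ) : pathOfFrom x0 b m = [] := by
  unfold pathOfFrom
  rw [show m + 1 - x0 = 0 by omega]
  simp

lemma pathOfFrom_split {x0 m : ℕ} (h : x0 ≤ m) (b : ℕ → ℕ) :
    pathOfFrom x0 b m = colSeg x0 (b (x0 - 1)) (b x0) ++ pathOfFrom (x0 + 1) b m := by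
  unfold pathOfFrom
  rw [show m + 1 - x0 = (m + 1 - (x0 + 1)) + 1 by omega, List.range_succ_eq_map]
  rw [List.map_cons, List.flatten_cons, List.map_map]
  simp only [Nat.add_zero]
  congr 2
  apply List.map_congr_left
  intro i _
  simp only [Function.comp_apply, Nat.succ_eq_add_one]
  have h1 : x0 + (i + 1) = x0 + 1 + i := by omega
  rw [h1]

lemma pathOfFrom_le_of_ne_nil {x0 m : ℕ} {b : ℕ → ℕ} (h : pathOfFrom x0 b m ≠ []) :
    x0 ≤ m := by
  by_contra hc
  exact h (pathOfFrom_empty (by omega) b)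

lemma pathOfFrom_congr {x0 m : ℕ} (h1 : 1 ≤ x0) {b b' : ℕ → ℕ}
    (h : ∀ x, x0 - 1 ≤ x → b x = b' x) :
    pathOfFrom x0 b m = pathOfFrom x0 b' m := by
  unfold pathOfFrom
  congr 1
  apply List.map_congr_left
  intro i _
  rw [h _ (by omega), h _ (by omega)]

lemma isUpRightPath_pathOfFrom {b : ℕ → ℕ} (hb : Monotone b) :
    ∀ d x0, 1 ≤ x0 → x0 + d = m → 
    IsUpRightPath (pathOfFrom x0 b m) (x0, b (x0 - 1)) (m, b m) := by
  intro d
  induction d with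
  | zero =>
    intro x0 h1 hm
    subst hm
    simp only [Nat.add_zero] at *
    rw [pathOfFrom_split (le_refl x0), pathOfFrom_empty (by omega), List.append_nil]
    refine ⟨colSeg_head? (hb (by omega)) _, colSeg_getLast? (hb (by omega)) _, chain'_colSeg _ _ _⟩
  | succ d ih =>
    intro x0 h1 hm
    have hx0m : x0 ≤ m := by omega
    obtain ⟨h2, h3, h4⟩ := ih (x0 + 1) (by omega) (by omega)
    rw [pathOfFrom_split hx0m]
    have hne : pathOfFrom (x0 + 1) b m ≠ [] := by
      intro hc; rw [hc] at h2; simp at h2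
    refine ⟨?_, ?_, ?_⟩
    · rw [List.head?_append, colSeg_head? (hb (by omega))]; rfl
    · rw [List.getLast?_append, h3]; rfl
    · show List.IsChain _ _; rw [List.isChain_append]
      refine ⟨chain'_colSeg _ _ _, h4, ?_⟩
      intro u hu v hv
      rw [colSeg_getLast? (hb (by omega))] at hu
      rw [h2] at hv
      simp at hu hv
      subst hu; subst hv
      left; simp

lemma mem_pathOfFrom {b : ℕ → ℕ} (hb : Monotone b) {x0 m : ℕ} (h1 : 1 ≤ x0) (a c : ℕ) :
    (a, c) ∈ pathOfFrom x0 b m ↔ x0 ≤ a ∧ a ≤ m ∧ b (a - 1) ≤ c ∧ c ≤ b a := by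
  unfold pathOfFrom
  rw [List.mem_flatten]
  constructor
  · rintro ⟨l, hl, hmem⟩
    rw [List.mem_map] at hl
    obtain ⟨i, hi, rfl⟩ := hl
    rw [List.mem_range] at hi
    rw [mem_colSeg] at hmem
    obtain ⟨rfl, hc1, hc2⟩ := hmem
    refine ⟨by omega, by omega, hc1, hc2⟩
  · rintro ⟨ha1, ha2, hc1, hc2⟩
    refine ⟨colSeg a (b (a-1)) (b a), ?_, ?_⟩
    · rw [List.mem_map]
      exact ⟨a - x0, by rw [List.mem_range]; omega, by congr 2 <;> omega⟩
    · rw [mem_colSeg]; exact ⟨rfl, hc1, hc2⟩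

lemma sum_pathOfFrom (W : ℕ × ℕ → ℝ) (b : ℕ → ℕ) (m : ℕ) :
    ((pathOfFrom 1 b m).map W).sum
      = ∑ i ∈ Finset.range m, ∑ y ∈ Finset.Icc (b i) (b (i + 1)), W (i + 1, y) := by
  unfold pathOfFrom
  rw [show m + 1 - 1 = m by omega, List.map_flatten, List.map_map, List.sum_flatten,
    List.map_map, sum_list_range]
  apply Finset.sum_congr rfl
  intro i _
  simp only [Function.comp_apply]
  rw [sum_colSeg]
  have h1 : 1 + i = i + 1 := by omega
  have h2 : i + 1 - 1 = i := by omega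
  rw [h1, h2]

/-- Every up-right path ending in column `m` is of the form `pathOfFrom x0 b m`. -/
lemma decode (m v : ℕ) :
    ∀ (P : List (ℕ × ℕ)), List.Chain' UpStep P → ∀ x0 y0, 1 ≤ x0 →
    P.head? = some (x0, y0) → P.getLast? = some (m, v) →
    ∃ b : ℕ → ℕ, Monotone b ∧ (∀ x, x < x0 → b x = y0) ∧ (∀ x, m ≤ x → b x = v) ∧
      P = pathOfFrom x0 b m := by
  intro P
  induction P with
  | nil => intro _ x0 y0 _ h; simp at h
  | cons u P' ih =>
    intro hchain x0 y0 hx0 hhead hlast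
    simp only [List.head?_cons, Option.some.injEq] at hhead
    subst hhead
    match P', hchain, hlast with
    | [], _, hlast =>
      simp only [List.getLast?_singleton, Option.some.injEq, Prod.mk.injEq] at hlast
      obtain ⟨rfl, rfl⟩ := hlast
      refine ⟨fun _ => y0, monotone_const, fun _ _ => rfl, fun _ _ => rfl, ?_⟩
      rw [pathOfFrom_split (le_refl x0), pathOfFrom_empty (by omega), List.append_nil,
        colSeg_single]
    | u' :: P'', hchain, hlast =>
      have hchain' : List.Chain' UpStep (u' :: P'') := hchain.tail
      have hstep : UpStep (x0, y0) u' := by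
        rcases List.isChain_cons_cons.mp hchain with ⟨h, _⟩; exact h
      have hlast' : (u' :: P'').getLast? = some (m, v) := by
        rwa [List.getLast?_cons_cons] at hlast
      rcases hstep with ⟨h1, h2⟩ | ⟨h1, h2⟩
      · -- right step : u' = (x0+1, y0)
        have hu' : u' = (x0 + 1, y0) := by
          obtain ⟨a, c⟩ := u'; simp at h1 h2; simp [h1, h2]
        subst hu'
        obtain ⟨b, hmono, hpad, hend, hrep⟩ :=
          ih hchain' (x0 + 1) y0 (by omega) (by rfl) hlast'
        have hx0m : x0 + 1 ≤ m := pathOfFrom_le_of_ne_nil (by rw [← hrep]; simp)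
        refine ⟨b, hmono, fun x hx => hpad x (by omega), hend, ?_⟩
        rw [pathOfFrom_split (by omega : x0 ≤ m), ← hrep,
          hpad (x0 - 1) (by omega), hpad x0 (by omega), colSeg_single]
        rfl
      · -- up step : u' = (x0, y0+1)
        have hu' : u' = (x0, y0 + 1) := by
          obtain ⟨a, c⟩ := u'; simp at h1 h2; simp [h1, h2]
        subst hu'
        obtain ⟨b, hmono, hpad, hend, hrep⟩ :=
          ih hchain' x0 (y0 + 1) hx0 (by rfl) hlast'
        have hx0m : x0 ≤ m := pathOfFrom_le_of_ne_nil (by rw [← hrep]; simp)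
        refine ⟨fun x => if x < x0 then y0 else b x, ?_, ?_, ?_, ?_⟩
        · intro x y hxy
          by_cases hx : x < x0 <;> by_cases hy : y < x0 <;> simp [hx, hy]
          · have : y0 + 1 ≤ b y := by
              rw [← hpad (x0 - 1) (by omega)]
              exact hmono (by omega)
            omega
          · omega
          · exact hmono hxy
        · intro x hx; simp [hx]
        · intro x hx
          have : ¬ x < x0 := by omega
          simp [this, hend x hx]
        · rw [pathOfFrom_split hx0m]
          have e1 : (if x0 - 1 < x0 then y0 else b (x0 - 1)) = y0 := by
            simp [show x0 - 1 < x0 by omega]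
          have e2 : (if x0 < x0 then y0 else b x0) = b x0 := by simp
          rw [e1, e2]
          have hb0 : y0 + 1 ≤ b x0 := by
            rw [← hpad (x0 - 1) (by omega)]; exact hmono (by omega)
          rw [colSeg_cons (by omega), hrep, pathOfFrom_split hx0m,
            hpad (x0 - 1) (by omega)]
          rw [pathOfFrom_congr (by omega : (1:ℕ) ≤ x0 + 1)
            (fun x hx => by simp [show ¬ x < x0 by omega] : ∀ x, x0 + 1 - 1 ≤ x →
              (fun x => if x < x0 then y0 else b x) x = b x)]
          rfl

/-- Two list-disjoint up-right path profiles starting at different heights stay ordered. -/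
lemma interlace_of_disjoint {b b' : ℕ → ℕ} (hb : Monotone b) (hb' : Monotone b') (m : ℕ)
    (h0 : b 0 < b' 0)
    (hd : ∀ u ∈ pathOfFrom 1 b m, u ∉ pathOfFrom 1 b' m) :
    ∀ i, i + 1 ≤ m → b (i + 1) < b' i := by
  have key : ∀ x, x ≤ m → b x < b' x ∧ (∀ i, i + 1 = x → b x < b' i) := by
    intro x
    induction x with
    | zero => intro _; exact ⟨h0, fun i hi => by omega⟩
    | succ i ihx =>
      intro hx
      have hbi : b i < b' i := (ihx (by omega)).1
      have hmain : b (i + 1) < b' i := by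
        by_contra hc
        push_neg at hc
        have hmem1 : (i + 1, b' i) ∈ pathOfFrom 1 b m := by
          rw [mem_pathOfFrom hb (le_refl 1)]
          refine ⟨by omega, hx, ?_, ?_⟩
          · simp only [Nat.add_sub_cancel]; omega
          · exact hc
        have hmem2 : (i + 1, b' i) ∈ pathOfFrom 1 b' m := by
          rw [mem_pathOfFrom hb' (le_refl 1)]
          refine ⟨by omega, hx, ?_, ?_⟩
          · simp only [Nat.add_sub_cancel]; omega
          · exact hb' (by omega)
        exact hd _ hmem1 hmem2
      refine ⟨lt_of_lt_of_le hmain (hb' (by omega)), fun j hj => ?_⟩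
      have : j = i := by omega
      subst this; exact hmain
  intro i hi
  exact (key (i+1) hi).2 i rfl

/-- Interlaced profiles give vertex-disjoint paths. -/
lemma disjoint_of_interlace {b b' : ℕ → ℕ} (hb : Monotone b) (hb' : Monotone b') (m : ℕ)
    (h : ∀ i, i + 1 ≤ m → b (i + 1) < b' i) :
    ∀ u ∈ pathOfFrom 1 b m, u ∉ pathOfFrom 1 b' m := by
  rintro ⟨a, c⟩ hmem hmem'
  rw [mem_pathOfFrom hb (le_refl 1)] at hmem
  rw [mem_pathOfFrom hb' (le_refl 1)] at hmem'
  obtain ⟨ha1, ha2, hc1, hc2⟩ := hmem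
  obtain ⟨_, _, hc1', hc2'⟩ := hmem'
  have h1 : a - 1 + 1 = a := by omega
  have := h (a - 1) (by omega)
  rw [h1] at this
  omega


/-- Bundle of hypotheses: `a` is the height-profile family of a `(k+1)`-system,
`s` of a `(k-1)`-system. -/
structure SysHyp (k m n : ℕ) (a s : ℕ → ℕ → ℕ) : Prop where
  hk : 1 ≤ k
  hm : k + 1 ≤ m
  hn : k + 1 ≤ n
  ha_mono : ∀ p, Monotone (a p)
  ha0 : ∀ p, 1 ≤ p → p ≤ k + 1 → a p 0 = p
  ham : ∀ p, 1 ≤ p → p ≤ k + 1 → ∀ x, m ≤ x → a p x = n - (k + 1) + p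
  haint : ∀ p i, 1 ≤ p → p ≤ k → i + 1 ≤ m → a p (i + 1) < a (p + 1) i
  hs_mono : ∀ p, Monotone (s p)
  hs0 : ∀ p, 1 ≤ p → p + 1 ≤ k → s p 0 = p
  hsm : ∀ p, 1 ≤ p → p + 1 ≤ k → ∀ x, m ≤ x → s p x = n + 1 - k + p
  hsint : ∀ p i, 1 ≤ p → p + 2 ≤ k → i + 1 ≤ m → s p (i + 1) < s (p + 1) i

/-- Extended bottom/top profile family for the `(k-1)`-system `s`. -/
def Scv (k n : ℕ) (s : ℕ → ℕ → ℕ) (p x : ℕ) : ℕ :=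
  if p = 0 then 0 else if k ≤ p then n else s p x

/-- The `C`-system: min-envelope of `s p` and `a (p+1)`, with the corner cap. -/
def Ccv (k n : ℕ) (a s : ℕ → ℕ → ℕ) (p x : ℕ) : ℕ :=
  if x + p ≤ k then p else min (Scv k n s p x) (a (p + 1) x)

/-- The `D`-system: max-envelope of `s (p-1)` and `a p`, with the corner floor. -/
def Dcv (k m n : ℕ) (a s : ℕ → ℕ → ℕ) (p x : ℕ) : ℕ :=
  if m < x + p then n - k + p else max (Scv k n s (p - 1) x) (a p x)

namespace SysHyp

variable {k m n : ℕ} {a s : ℕ → ℕ → ℕ} (H : SysHyp k m n a s)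
include H

lemma haLow : ∀ p x, 1 ≤ p → p ≤ k + 1 → p ≤ a p x := by
  intro p x h1 h2
  have h := H.ha_mono p (Nat.zero_le x)
  rw [H.ha0 p h1 h2] at h
  exact h

lemma haUp : ∀ p x, 1 ≤ p → p ≤ k + 1 → a p x + (k + 1) ≤ n + p := by
  intro p x h1 h2
  have h3 : a p x ≤ a p (max x m) := H.ha_mono p (le_max_left x m)
  rw [H.ham p h1 h2 (max x m) (le_max_right x m)] at h3
  have := H.hn
  omega

lemma hsLow : ∀ p x, 1 ≤ p → p + 1 ≤ k → p ≤ s p x := by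
  intro p x h1 h2
  have h := H.hs_mono p (Nat.zero_le x)
  rw [H.hs0 p h1 h2] at h
  exact h

lemma hsUp : ∀ p x, 1 ≤ p → p + 1 ≤ k → s p x + k ≤ n + 1 + p := by
  intro p x h1 h2
  have h3 : s p x ≤ s p (max x m) := H.hs_mono p (le_max_left x m)
  rw [H.hsm p h1 h2 (max x m) (le_max_right x m)] at h3
  have := H.hn
  omega

lemma hS_mono : ∀ p, Monotone (Scv k n s p) := by
  intro p
  unfold Scv
  split
  · exact monotone_const
  · split
    · exact monotone_const
    · exact H.hs_mono p

lemma hSlow : ∀ p x, p ≤ k → p ≤ Scv k n s p x := by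
  intro p x h2
  have := H.hn
  unfold Scv
  split
  · omega
  · split
    · omega
    · exact H.hsLow p x (by omega) (by omega)

lemma hSup : ∀ p x, p + 1 ≤ k → Scv k n s p x + k ≤ n + 1 + p := by
  intro p x h2
  have := H.hn
  unfold Scv
  split
  · omega
  · split
    · omega
    · exact H.hsUp p x (by omega) (by omega)

lemma hC_mono : ∀ p, 1 ≤ p → p ≤ k → Monotone (Ccv k n a s p) := by
  intro p h1 h2 x y hxy
  unfold Ccv
  by_cases hx : x + p ≤ k <;> by_cases hy : y + p ≤ k
  · rw [if_pos hx, if_pos hy]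
  · rw [if_pos hx, if_neg hy]
    exact le_min (H.hSlow p y h2)
      (le_trans (by omega) (H.haLow (p+1) y (by omega) (by omega)))
  · omega
  · rw [if_neg hx, if_neg hy]
    exact min_le_min (H.hS_mono p hxy) (H.ha_mono (p+1) hxy)

lemma hC0 : ∀ p, 1 ≤ p → p ≤ k → Ccv k n a s p 0 = p := by
  intro p h1 h2
  unfold Ccv
  rw [if_pos (by omega)]

lemma hCm : ∀ p, 1 ≤ p → p ≤ k → Ccv k n a s p m = n - k + p := by
  intro p h1 h2
  have hm := H.hm
  have hn := H.hn
  unfold Ccv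
  rw [if_neg (by omega)]
  have hup : a (p+1) m = n - (k+1) + (p+1) := H.ham (p+1) (by omega) (by omega) m (le_refl m)
  unfold Scv
  rcases Nat.lt_or_ge p k with hpk | hpk
  · rw [if_neg (by omega), if_neg (by omega), H.hsm p (by omega) (by omega) m (le_refl m), hup]
    omega
  · rw [if_neg (by omega), if_pos (by omega), hup]
    omega

lemma hCub : ∀ p x, 1 ≤ p → p ≤ k → Ccv k n a s p x ≤ n := by
  intro p x h1 h2
  have hn := H.hn
  unfold Ccv
  split
  · omega
  · have := H.haUp (p+1) x (by omega) (by omega)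
    have h3 : min (Scv k n s p x) (a (p+1) x) ≤ a (p+1) x := min_le_right _ _
    omega

lemma hCint : ∀ p i, 1 ≤ p → p + 1 ≤ k → i + 1 ≤ m →
    Ccv k n a s p (i + 1) < Ccv k n a s (p + 1) i := by
  intro p i h1 h2 him
  have hLHS : Ccv k n a s p (i+1) ≤ min (Scv k n s p (i+1)) (a (p+1) (i+1)) := by
    unfold Ccv
    split
    · exact le_min (H.hSlow p (i+1) (by omega))
        (le_trans (by omega) (H.haLow (p+1) (i+1) (by omega) (by omega)))
    · exact le_refl _
  by_cases hr : i + (p + 1) ≤ k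
  · have hRHS : Ccv k n a s (p+1) i = p + 1 := by unfold Ccv; rw [if_pos (by omega)]
    have hL : Ccv k n a s p (i+1) = p := by unfold Ccv; rw [if_pos (by omega)]
    omega
  · have hRHS : Ccv k n a s (p+1) i = min (Scv k n s (p+1) i) (a (p+2) i) := by
      unfold Ccv; rw [if_neg (by omega)]
    rw [hRHS]
    apply lt_min
    · rcases Nat.lt_or_ge (p+1) k with hpk | hpk
      · have h4 : Scv k n s p (i+1) < Scv k n s (p+1) i := by
          unfold Scv
          rw [if_neg (by omega), if_neg (by omega), if_neg (by omega), if_neg (by omega)]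
          exact H.hsint p i (by omega) (by omega) him
        have := min_le_left (Scv k n s p (i+1)) (a (p+1) (i+1))
        omega
      · have hSk : Scv k n s (p+1) i = n := by
          unfold Scv; rw [if_neg (by omega), if_pos (by omega)]
        have h5 := H.haUp (p+1) (i+1) (by omega) (by omega)
        have := min_le_right (Scv k n s p (i+1)) (a (p+1) (i+1))
        have hn := H.hn
        omega
    · have h4 : a (p+1) (i+1) < a (p+2) i := H.haint (p+1) i (by omega) (by omega) him
      have := min_le_right (Scv k n s p (i+1)) (a (p+1) (i+1))
      omega

lemma hDub : ∀ p x, 1 ≤ p → p ≤ k → Dcv k m n a s p x ≤ n - k + p := by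
  intro p x h1 h2
  have hn := H.hn
  unfold Dcv
  split
  · omega
  · have h3 := H.haUp p x (by omega) (by omega)
    have h4 : Scv k n s (p-1) x + k ≤ n + 1 + (p - 1) := H.hSup (p-1) x (by omega)
    exact max_le (by omega) (by omega)

lemma hD_mono : ∀ p, 1 ≤ p → p ≤ k → Monotone (Dcv k m n a s p) := by
  intro p h1 h2 x y hxy
  have hn := H.hn
  by_cases hx : m < x + p <;> by_cases hy : m < y + p
  · unfold Dcv; rw [if_pos hx, if_pos hy]
  · omega
  · have h5 : Dcv k m n a s p x ≤ n - k + p := H.hDub p x h1 h2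
    have h6 : Dcv k m n a s p y = n - k + p := by unfold Dcv; rw [if_pos hy]
    omega
  · unfold Dcv; rw [if_neg hx, if_neg hy]
    exact max_le_max (H.hS_mono (p-1) hxy) (H.ha_mono p hxy)

lemma hD0 : ∀ p, 1 ≤ p → p ≤ k → Dcv k m n a s p 0 = p := by
  intro p h1 h2
  have hm := H.hm
  unfold Dcv
  rw [if_neg (by omega)]
  have h3 : a p 0 = p := H.ha0 p (by omega) (by omega)
  have h4 : Scv k n s (p-1) 0 ≤ p := by
    unfold Scv
    split
    · omega
    · rw [if_neg (by omega), H.hs0 (p-1) (by omega) (by omega)]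
      omega
  rw [h3]
  exact max_eq_right h4

lemma hDm : ∀ p, 1 ≤ p → p ≤ k → Dcv k m n a s p m = n - k + p := by
  intro p h1 h2
  unfold Dcv
  rw [if_pos (by omega)]

lemma hDint : ∀ p i, 1 ≤ p → p + 1 ≤ k → i + 1 ≤ m →
    Dcv k m n a s p (i + 1) < Dcv k m n a s (p + 1) i := by
  intro p i h1 h2 him
  by_cases hr : m < i + (p + 1)
  · have hRHS : Dcv k m n a s (p+1) i = n - k + (p+1) := by unfold Dcv; rw [if_pos (by omega)]
    have h3 := H.hDub p (i+1) (by omega) (by omega)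
    have hn := H.hn
    omega
  · have hRHS : Dcv k m n a s (p+1) i = max (Scv k n s p i) (a (p+1) i) := by
      unfold Dcv
      rw [if_neg (by omega)]
      have hp : p + 1 - 1 = p := by omega
      rw [hp]
    have hLHS : Dcv k m n a s p (i+1) = max (Scv k n s (p-1) (i+1)) (a p (i+1)) := by
      unfold Dcv; rw [if_neg (by omega)]
    rw [hRHS, hLHS]
    have h4 : a p (i+1) < a (p+1) i := H.haint p i (by omega) (by omega) him
    have hmr := le_max_right (Scv k n s p i) (a (p+1) i)
    have hml := le_max_left (Scv k n s p i) (a (p+1) i)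
    apply max_lt
    · rcases Nat.eq_or_lt_of_le h1 with h6 | h6
      · have : Scv k n s (p-1) (i+1) = 0 := by unfold Scv; rw [if_pos (by omega)]
        have := H.haLow (p+1) i (by omega) (by omega)
        omega
      · have h7 : Scv k n s (p-1) (i+1) = s (p-1) (i+1) := by
          unfold Scv; rw [if_neg (by omega), if_neg (by omega)]
        have h8 : Scv k n s p i = s p i := by
          unfold Scv; rw [if_neg (by omega), if_neg (by omega)]
        have h9 : s (p-1) (i+1) < s p i := by
          have := H.hsint (p-1) i (by omega) (by omega) him
          have hp : p - 1 + 1 = p := by omega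
          rwa [hp] at this
        omega
    · omega

end SysHyp

/-- Total weight of the path with profile `b` (from column 1 to column `m`). -/
def Phi (W : ℕ × ℕ → ℝ) (m : ℕ) (b : ℕ → ℕ) : ℝ :=
  ∑ i ∈ Finset.range m, ∑ y ∈ Finset.Icc (b i) (b (i + 1)), W (i + 1, y)

lemma sum_pathOfFrom_phi (W : ℕ × ℕ → ℝ) (b : ℕ → ℕ) (m : ℕ) :
    ((pathOfFrom 1 b m).map W).sum = Phi W m b :=
  sum_pathOfFrom W b m

/-- `{0,1}`-valued level indicator. -/
def eR (v y : ℕ) : ℝ := if y ≤ v then 1 else 0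

lemma eR_minmax (u v y : ℕ) : eR (min u v) y + eR (max u v) y = eR u y + eR v y := by
  rcases le_total u v with h | h
  · rw [min_eq_left h, max_eq_right h]
  · rw [min_eq_right h, max_eq_left h, add_comm]

/-- Interval indicator. -/
def indR (b1 b2 y : ℕ) : ℝ := if b1 ≤ y ∧ y ≤ b2 then 1 else 0

lemma indR_eq {b1 b2 : ℕ} (h : b1 ≤ b2) (y : ℕ) :
    indR b1 b2 y = eR b2 y - eR b1 (y + 1) := by
  unfold indR eR
  by_cases h1 : b1 ≤ y <;> by_cases h2 : y ≤ b2
  · rw [if_pos ⟨h1, h2⟩, if_pos h2, if_neg (by omega)]; norm_num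
  · rw [if_neg (fun hc => h2 hc.2), if_neg h2, if_neg (by omega)]; norm_num
  · rw [if_neg (fun hc => h1 hc.1), if_pos h2, if_pos (by omega)]; norm_num
  · rw [if_neg (fun hc => h1 hc.1), if_neg h2, if_neg (by omega)]; norm_num

lemma sum_Icc_ite (f : ℕ → ℝ) (b1 b2 N : ℕ) (h1 : b1 ≤ b2) (h2 : b2 ≤ N) :
    ∑ y ∈ Finset.Icc b1 b2, f y
      = ∑ y ∈ Finset.Icc 0 N, if b1 ≤ y ∧ y ≤ b2 then f y else 0 := by
  rw [← Finset.sum_filter]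
  apply Finset.sum_congr _ (fun _ _ => rfl)
  ext y
  simp only [Finset.mem_filter, Finset.mem_Icc]
  omega

lemma Phi_eq (W : ℕ × ℕ → ℝ) (m n : ℕ) {b : ℕ → ℕ} (hb : Monotone b)
    (hub : ∀ x, b x ≤ n) :
    Phi W m b = ∑ i ∈ Finset.range m, ∑ y ∈ Finset.Icc 0 n,
      indR (b i) (b (i + 1)) y * W (i + 1, y) := by
  unfold Phi
  apply Finset.sum_congr rfl
  intro i _
  rw [sum_Icc_ite (fun y => W (i+1, y)) (b i) (b (i+1)) n (hb (by omega)) (hub (i+1))]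
  apply Finset.sum_congr rfl
  intro y _
  unfold indR
  rw [ite_mul, one_mul, zero_mul]

/-- Cap correction term. -/
def capR (k n : ℕ) (a s : ℕ → ℕ → ℕ) (p x y : ℕ) : ℝ :=
  if x + p ≤ k ∧ p < y ∧ y ≤ Scv k n s p x ∧ y ≤ a (p + 1) x then 1 else 0

/-- Floor correction term. -/
def floorR (k m n : ℕ) (a s : ℕ → ℕ → ℕ) (p x y : ℕ) : ℝ :=
  if m < x + p ∧ Scv k n s (p - 1) x < y ∧ a p x < y ∧ y + k ≤ n + p then 1 else 0

lemma capR_nonneg (k n : ℕ) (a s : ℕ → ℕ → ℕ) (p x y : ℕ) : 0 ≤ capR k n a s p x y := by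
  unfold capR; split_ifs <;> norm_num

lemma floorR_nonneg (k m n : ℕ) (a s : ℕ → ℕ → ℕ) (p x y : ℕ) :
    0 ≤ floorR k m n a s p x y := by
  unfold floorR; split_ifs <;> norm_num

namespace SysHyp

variable {k m n : ℕ} {a s : ℕ → ℕ → ℕ} (H : SysHyp k m n a s)
include H

/-- Pointwise identity for the capped min-envelope. -/
lemma eC_eq (p x y : ℕ) (h1 : 1 ≤ p) (h2 : p ≤ k) :
    eR (Ccv k n a s p x) y
      = eR (min (Scv k n s p x) (a (p + 1) x)) y - capR k n a s p x y := by
  have hSl := H.hSlow p x h2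
  have hal := H.haLow (p+1) x (by omega) (by omega)
  have hM : p ≤ min (Scv k n s p x) (a (p + 1) x) := le_min hSl (by omega)
  by_cases hr : x + p ≤ k
  · have hC : Ccv k n a s p x = p := by unfold Ccv; rw [if_pos hr]
    by_cases hy : y ≤ p
    · have hcap : capR k n a s p x y = 0 := by
        unfold capR; rw [if_neg]; rintro ⟨_, h, _⟩; omega
      rw [hC, hcap]
      unfold eR
      rw [if_pos hy, if_pos (le_trans hy hM)]
      ring
    · by_cases hy2 : y ≤ min (Scv k n s p x) (a (p + 1) x)
      · have hcap : capR k n a s p x y = 1 := by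
          unfold capR
          rw [if_pos ⟨hr, by omega, (le_min_iff.mp hy2).1, (le_min_iff.mp hy2).2⟩]
        rw [hC, hcap]
        unfold eR
        rw [if_neg hy, if_pos hy2]
        ring
      · have hcap : capR k n a s p x y = 0 := by
          unfold capR; rw [if_neg]; rintro ⟨_, _, hs, ha⟩; exact hy2 (le_min hs ha)
        rw [hC, hcap]
        unfold eR
        rw [if_neg hy, if_neg hy2]
        ring
  · have hC : Ccv k n a s p x = min (Scv k n s p x) (a (p + 1) x) := by
      unfold Ccv; rw [if_neg hr]
    have hcap : capR k n a s p x y = 0 := by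
      unfold capR; rw [if_neg]; rintro ⟨h, _⟩; exact hr h
    rw [hC, hcap]
    ring

/-- Pointwise identity for the floored max-envelope. -/
lemma eD_eq (p x y : ℕ) (h1 : 1 ≤ p) (h2 : p ≤ k) :
    eR (Dcv k m n a s p x) y
      = eR (max (Scv k n s (p - 1) x) (a p x)) y + floorR k m n a s p x y := by
  have hub : max (Scv k n s (p-1) x) (a p x) + k ≤ n + p := by
    have h3 := H.haUp p x (by omega) (by omega)
    have h4 : Scv k n s (p-1) x + k ≤ n + 1 + (p - 1) := H.hSup (p-1) x (by omega)
    have h5 := H.hn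
    rcases max_choice (Scv k n s (p-1) x) (a p x) with h | h <;> rw [h] <;> omega
  have h5 := H.hn
  by_cases hr : m < x + p
  · have hD : Dcv k m n a s p x = n - k + p := by unfold Dcv; rw [if_pos hr]
    by_cases hy : y ≤ max (Scv k n s (p-1) x) (a p x)
    · have hfl : floorR k m n a s p x y = 0 := by
        unfold floorR
        rw [if_neg]
        rintro ⟨_, hs, ha, _⟩
        rcases le_max_iff.mp hy with h | h <;> omega
      rw [hD, hfl]
      unfold eR
      rw [if_pos hy, if_pos (by omega)]
      ring
    · push_neg at hy
      by_cases hy2 : y + k ≤ n + p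
      · have hfl : floorR k m n a s p x y = 1 := by
          unfold floorR
          rw [if_pos ⟨hr, lt_of_le_of_lt (le_max_left _ _) hy,
            lt_of_le_of_lt (le_max_right _ _) hy, hy2⟩]
        rw [hD, hfl]
        unfold eR
        rw [if_pos (by omega), if_neg (by omega)]
        ring
      · have hfl : floorR k m n a s p x y = 0 := by
          unfold floorR; rw [if_neg]; rintro ⟨_, _, _, hc⟩; exact hy2 hc
        rw [hD, hfl]
        unfold eR
        rw [if_neg (by omega), if_neg (by omega)]
        ring
  · have hD : Dcv k m n a s p x = max (Scv k n s (p-1) x) (a p x) := by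
      unfold Dcv; rw [if_neg hr]
    have hfl : floorR k m n a s p x y = 0 := by
      unfold floorR; rw [if_neg]; rintro ⟨h, _⟩; exact hr h
    rw [hD, hfl]
    ring

end SysHyp

def CapS (k n : ℕ) (a s : ℕ → ℕ → ℕ) (x y : ℕ) : ℝ :=
  ∑ j ∈ Finset.range k, capR k n a s (j + 1) x y

def FloorS (k m n : ℕ) (a s : ℕ → ℕ → ℕ) (x y : ℕ) : ℝ :=
  ∑ j ∈ Finset.range k, floorR k m n a s (j + 1) x y

def NnewR (k m n : ℕ) (a s : ℕ → ℕ → ℕ) (x y : ℕ) : ℝ :=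
  ∑ j ∈ Finset.range k, (eR (Ccv k n a s (j + 1) x) y + eR (Dcv k m n a s (j + 1) x) y)

def NoldR (k : ℕ) (a s : ℕ → ℕ → ℕ) (x y : ℕ) : ℝ :=
  ∑ j ∈ Finset.range (k + 1), eR (a (j + 1) x) y
    + ∑ j ∈ Finset.range (k - 1), eR (s (j + 1) x) y

namespace SysHyp

variable {k m n : ℕ} {a s : ℕ → ℕ → ℕ} (H : SysHyp k m n a s)
include H

lemma cap_cascade (p i y : ℕ) (h1 : 1 ≤ p) (h2 : p + 1 ≤ k) (him : i + 1 ≤ m) :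
    capR k n a s p (i + 1) y ≤ capR k n a s (p + 1) i (y + 1) := by
  by_cases hc : (i + 1) + p ≤ k ∧ p < y ∧ y ≤ Scv k n s p (i + 1) ∧ y ≤ a (p + 1) (i + 1)
  · obtain ⟨hc1, hc2, hc3, hc4⟩ := hc
    have hL : capR k n a s p (i + 1) y = 1 := by
      unfold capR; rw [if_pos ⟨hc1, hc2, hc3, hc4⟩]
    have hR : capR k n a s (p + 1) i (y + 1) = 1 := by
      unfold capR
      rw [if_pos]
      refine ⟨by omega, by omega, ?_, ?_⟩
      · -- y + 1 ≤ Scv (p+1) i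
        rcases Nat.lt_or_ge (p + 1) k with hpk | hpk
        · have e1 : Scv k n s (p + 1) i = s (p + 1) i := by
            unfold Scv; rw [if_neg (by omega), if_neg (by omega)]
          have e2 : Scv k n s p (i + 1) = s p (i + 1) := by
            unfold Scv; rw [if_neg (by omega), if_neg (by omega)]
          have h3 := H.hsint p i (by omega) (by omega) him
          omega
        · have e1 : Scv k n s (p + 1) i = n := by
            unfold Scv; rw [if_neg (by omega), if_pos (by omega)]
          have h3 := H.haUp (p + 1) (i + 1) (by omega) (by omega)
          omega
      · -- y + 1 ≤ a (p+2) i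
        have h3 := H.haint (p + 1) i (by omega) (by omega) him
        omega
    rw [hL, hR]
  · have hL : capR k n a s p (i + 1) y = 0 := by unfold capR; rw [if_neg hc]
    rw [hL]
    exact capR_nonneg k n a s (p + 1) i (y + 1)

omit H in
lemma cap_top_zero (i y : ℕ) : capR k n a s k (i + 1) y = 0 := by
  unfold capR; rw [if_neg]; rintro ⟨h, _⟩; omega

lemma floor_cascade (p i y : ℕ) (h1 : 2 ≤ p) (h2 : p ≤ k) (him : i + 1 ≤ m) :
    floorR k m n a s p i (y + 1) ≤ floorR k m n a s (p - 1) (i + 1) y := by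
  by_cases hc : m < i + p ∧ Scv k n s (p - 1) i < y + 1 ∧ a p i < y + 1 ∧ y + 1 + k ≤ n + p
  · obtain ⟨hc1, hc2, hc3, hc4⟩ := hc
    have hL : floorR k m n a s p i (y + 1) = 1 := by
      unfold floorR; rw [if_pos ⟨hc1, hc2, hc3, hc4⟩]
    have haint' : a (p - 1) (i + 1) < a p i := by
      have h3 := H.haint (p - 1) i (by omega) (by omega) him
      have hp : p - 1 + 1 = p := by omega
      rwa [hp] at h3
    have hR : floorR k m n a s (p - 1) (i + 1) y = 1 := by
      unfold floorR
      rw [if_pos]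
      refine ⟨by omega, ?_, by omega, by omega⟩
      -- Scv (p-1-1) (i+1) < y
      rcases Nat.eq_or_lt_of_le h1 with h4 | h4
      · have e1 : Scv k n s (p - 1 - 1) (i + 1) = 0 := by
          unfold Scv; rw [if_pos (by omega)]
        have h5 := H.haLow p i (by omega) (by omega)
        omega
      · have e1 : Scv k n s (p - 1 - 1) (i + 1) = s (p - 2) (i + 1) := by
          unfold Scv
          rw [if_neg (by omega), if_neg (by omega)]
          rfl
        have e2 : Scv k n s (p - 1) i = s (p - 1) i := by
          unfold Scv; rw [if_neg (by omega), if_neg (by omega)]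
        have h5 : s (p - 2) (i + 1) < s (p - 1) i := by
          have h6 := H.hsint (p - 2) i (by omega) (by omega) him
          have hp : p - 2 + 1 = p - 1 := by omega
          rwa [hp] at h6
        omega
    rw [hL, hR]
  · have hL : floorR k m n a s p i (y + 1) = 0 := by unfold floorR; rw [if_neg hc]
    rw [hL]
    exact floorR_nonneg k m n a s (p - 1) (i + 1) y

omit H in
lemma floor_bot_zero (i y : ℕ) (him : i + 1 ≤ m) : floorR k m n a s 1 i (y + 1) = 0 := by
  unfold floorR; rw [if_neg]; rintro ⟨h, _⟩; omega

lemma CapS_cascade (i y : ℕ) (him : i + 1 ≤ m) :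
    CapS k n a s (i + 1) y ≤ CapS k n a s i (y + 1) := by
  obtain ⟨k', rfl⟩ : ∃ k', k = k' + 1 := ⟨k - 1, by have := H.hk; omega⟩
  unfold CapS
  rw [Finset.sum_range_succ, Finset.sum_range_succ']
  have h1 : capR (k' + 1) n a s (k' + 1) (i + 1) y = 0 := cap_top_zero i y
  have h2 : (0:ℝ) ≤ capR (k' + 1) n a s (0 + 1) i (y + 1) := capR_nonneg _ _ _ _ _ _ _
  have h3 : ∑ j ∈ Finset.range k', capR (k' + 1) n a s (j + 1) (i + 1) y
      ≤ ∑ j ∈ Finset.range k', capR (k' + 1) n a s (j + 1 + 1) i (y + 1) := by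
    apply Finset.sum_le_sum
    intro j hj
    rw [Finset.mem_range] at hj
    exact H.cap_cascade (j + 1) i y (by omega) (by omega) him
  linarith

lemma FloorS_cascade (i y : ℕ) (him : i + 1 ≤ m) :
    FloorS k m n a s i (y + 1) ≤ FloorS k m n a s (i + 1) y := by
  obtain ⟨k', rfl⟩ : ∃ k', k = k' + 1 := ⟨k - 1, by have := H.hk; omega⟩
  unfold FloorS
  rw [Finset.sum_range_succ', Finset.sum_range_succ]
  have h1 : floorR (k' + 1) m n a s (0 + 1) i (y + 1) = 0 := floor_bot_zero i (y) him
  have h2 : (0:ℝ) ≤ floorR (k' + 1) m n a s (k' + 1) (i + 1) y := floorR_nonneg _ _ _ _ _ _ _ _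
  have h3 : ∑ j ∈ Finset.range k', floorR (k' + 1) m n a s (j + 1 + 1) i (y + 1)
      ≤ ∑ j ∈ Finset.range k', floorR (k' + 1) m n a s (j + 1) (i + 1) y := by
    apply Finset.sum_le_sum
    intro j hj
    rw [Finset.mem_range] at hj
    have h4 := H.floor_cascade (j + 1 + 1) i y (by omega) (by omega) him
    have hp : j + 1 + 1 - 1 = j + 1 := by omega
    rwa [hp] at h4
  linarith

lemma Nnew_eq (x y : ℕ) :
    NnewR k m n a s x y = NoldR k a s x y + FloorS k m n a s x y - CapS k n a s x y := by
  have step1 : NnewR k m n a s x y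
      = ∑ j ∈ Finset.range k,
          ((eR (min (Scv k n s (j + 1) x) (a (j + 1 + 1) x)) y
            + eR (max (Scv k n s (j + 1 - 1) x) (a (j + 1) x)) y)
          + (floorR k m n a s (j + 1) x y - capR k n a s (j + 1) x y)) := by
    unfold NnewR
    apply Finset.sum_congr rfl
    intro j hj
    rw [Finset.mem_range] at hj
    rw [H.eC_eq (j + 1) x y (by omega) (by omega), H.eD_eq (j + 1) x y (by omega) (by omega)]
    ring
  rw [step1, Finset.sum_add_distrib, Finset.sum_sub_distrib]
  have pairing : ∑ j ∈ Finset.range k,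
      (eR (min (Scv k n s (j + 1) x) (a (j + 1 + 1) x)) y
        + eR (max (Scv k n s (j + 1 - 1) x) (a (j + 1) x)) y) = NoldR k a s x y := by
    obtain ⟨k', rfl⟩ : ∃ k', k = k' + 1 := ⟨k - 1, by have := H.hk; omega⟩
    rw [Finset.sum_add_distrib]
    rw [Finset.sum_range_succ]   -- A-sum : range k' + top
    rw [Finset.sum_range_succ']  -- B-sum : bottom + shifted range k'
    have eA : eR (min (Scv (k' + 1) n s (k' + 1) x) (a (k' + 1 + 1) x)) y
        = eR (a (k' + 1 + 1) x) y := by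
      have e1 : Scv (k' + 1) n s (k' + 1) x = n := by
        unfold Scv; rw [if_neg (by omega), if_pos (by omega)]
      have e2 := H.haUp (k' + 1 + 1) x (by omega) (by omega)
      rw [e1, min_eq_right (by omega)]
    have eB : eR (max (Scv (k' + 1) n s (0 + 1 - 1) x) (a (0 + 1) x)) y
        = eR (a 1 x) y := by
      have e1 : Scv (k' + 1) n s (0 + 1 - 1) x = 0 := by
        unfold Scv; rw [if_pos (by omega)]
      rw [e1, max_eq_right (Nat.zero_le _)]
    rw [eA, eB]
    have merge : ∑ j ∈ Finset.range k',
          eR (min (Scv (k' + 1) n s (j + 1) x) (a (j + 1 + 1) x)) y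
        + ∑ j ∈ Finset.range k',
          eR (max (Scv (k' + 1) n s (j + 1 + 1 - 1) x) (a (j + 1 + 1) x)) y
        = ∑ j ∈ Finset.range k', eR (s (j + 1) x) y
        + ∑ j ∈ Finset.range k', eR (a (j + 1 + 1) x) y := by
      rw [← Finset.sum_add_distrib, ← Finset.sum_add_distrib]
      apply Finset.sum_congr rfl
      intro j hj
      rw [Finset.mem_range] at hj
      have e1 : Scv (k' + 1) n s (j + 1 + 1 - 1) x = s (j + 1) x := by
        unfold Scv
        rw [if_neg (by omega), if_neg (by omega)]
        rfl
      have e2 : Scv (k' + 1) n s (j + 1) x = s (j + 1) x := by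
        unfold Scv; rw [if_neg (by omega), if_neg (by omega)]
      rw [e1, e2, eR_minmax]
    unfold NoldR
    have eNoldA : ∑ j ∈ Finset.range (k' + 1 + 1), eR (a (j + 1) x) y
        = eR (a 1 x) y + (∑ j ∈ Finset.range k', eR (a (j + 1 + 1) x) y
            + eR (a (k' + 1 + 1) x) y) := by
      rw [Finset.sum_range_succ, Finset.sum_range_succ']
      ring
    have hk1 : k' + 1 - 1 = k' := by omega
    rw [eNoldA, hk1]
    linarith [merge]
  rw [pairing]
  unfold FloorS CapS
  ring

lemma Cnt_ineq (i y : ℕ) (him : i + 1 ≤ m) :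
    ∑ j ∈ Finset.range (k + 1), indR (a (j + 1) i) (a (j + 1) (i + 1)) y
      + ∑ j ∈ Finset.range (k - 1), indR (s (j + 1) i) (s (j + 1) (i + 1)) y
    ≤ ∑ j ∈ Finset.range k,
        (indR (Ccv k n a s (j + 1) i) (Ccv k n a s (j + 1) (i + 1)) y
          + indR (Dcv k m n a s (j + 1) i) (Dcv k m n a s (j + 1) (i + 1)) y) := by
  have eqOldA : ∑ j ∈ Finset.range (k + 1), indR (a (j + 1) i) (a (j + 1) (i + 1)) y
      = ∑ j ∈ Finset.range (k + 1), eR (a (j + 1) (i + 1)) y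
        - ∑ j ∈ Finset.range (k + 1), eR (a (j + 1) i) (y + 1) := by
    rw [← Finset.sum_sub_distrib]
    exact Finset.sum_congr rfl fun j _ => indR_eq (H.ha_mono (j + 1) (by omega)) y
  have eqOldS : ∑ j ∈ Finset.range (k - 1), indR (s (j + 1) i) (s (j + 1) (i + 1)) y
      = ∑ j ∈ Finset.range (k - 1), eR (s (j + 1) (i + 1)) y
        - ∑ j ∈ Finset.range (k - 1), eR (s (j + 1) i) (y + 1) := by
    rw [← Finset.sum_sub_distrib]
    exact Finset.sum_congr rfl fun j _ => indR_eq (H.hs_mono (j + 1) (by omega)) y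
  have eqNew : ∑ j ∈ Finset.range k,
        (indR (Ccv k n a s (j + 1) i) (Ccv k n a s (j + 1) (i + 1)) y
          + indR (Dcv k m n a s (j + 1) i) (Dcv k m n a s (j + 1) (i + 1)) y)
      = NnewR k m n a s (i + 1) y - NnewR k m n a s i (y + 1) := by
    unfold NnewR
    rw [← Finset.sum_sub_distrib]
    apply Finset.sum_congr rfl
    intro j hj
    rw [Finset.mem_range] at hj
    rw [indR_eq (H.hC_mono (j + 1) (by omega) (by omega) (by omega : i ≤ i + 1)) y,
      indR_eq (H.hD_mono (j + 1) (by omega) (by omega) (by omega : i ≤ i + 1)) y]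
    ring
  have hNold : ∑ j ∈ Finset.range (k + 1), indR (a (j + 1) i) (a (j + 1) (i + 1)) y
      + ∑ j ∈ Finset.range (k - 1), indR (s (j + 1) i) (s (j + 1) (i + 1)) y
      = NoldR k a s (i + 1) y - NoldR k a s i (y + 1) := by
    rw [eqOldA, eqOldS]
    unfold NoldR
    ring
  rw [hNold, eqNew, H.Nnew_eq (i + 1) y, H.Nnew_eq i (y + 1)]
  have c1 := H.CapS_cascade i y him
  have c2 := H.FloorS_cascade i y him
  linarith

end SysHyp

lemma sum_Phi_swap (W : ℕ × ℕ → ℝ) (m n K : ℕ) (F : ℕ → ℕ → ℕ)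
    (hmono : ∀ j, j < K → Monotone (F j)) (hub : ∀ j, j < K → ∀ x, F j x ≤ n) :
    ∑ j ∈ Finset.range K, Phi W m (F j)
      = ∑ i ∈ Finset.range m, ∑ y ∈ Finset.Icc 0 n,
          (∑ j ∈ Finset.range K, indR (F j i) (F j (i + 1)) y) * W (i + 1, y) := by
  have step1 : ∑ j ∈ Finset.range K, Phi W m (F j)
      = ∑ j ∈ Finset.range K, ∑ i ∈ Finset.range m, ∑ y ∈ Finset.Icc 0 n,
          indR (F j i) (F j (i + 1)) y * W (i + 1, y) := by
    apply Finset.sum_congr rfl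
    intro j hj
    rw [Finset.mem_range] at hj
    exact Phi_eq W m n (hmono j hj) (hub j hj)
  rw [step1, Finset.sum_comm]
  apply Finset.sum_congr rfl
  intro i _
  rw [Finset.sum_comm]
  apply Finset.sum_congr rfl
  intro y _
  rw [← Finset.sum_mul]

namespace SysHyp

variable {k m n : ℕ} {a s : ℕ → ℕ → ℕ} (H : SysHyp k m n a s)
include H

lemma weight_le (W : ℕ × ℕ → ℝ) (hW : ∀ v, 0 ≤ W v) :
    ∑ j ∈ Finset.range (k + 1), Phi W m (a (j + 1))
      + ∑ j ∈ Finset.range (k - 1), Phi W m (s (j + 1))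
    ≤ ∑ j ∈ Finset.range k, Phi W m (Ccv k n a s (j + 1))
      + ∑ j ∈ Finset.range k, Phi W m (Dcv k m n a s (j + 1)) := by
  have hn := H.hn
  have eA := sum_Phi_swap W m n (k + 1) (fun j => a (j + 1))
    (fun j _ => H.ha_mono (j + 1))
    (fun j hj x => by show a (j + 1) x ≤ n; have := H.haUp (j + 1) x (by omega) (by omega); omega)
  have eS := sum_Phi_swap W m n (k - 1) (fun j => s (j + 1))
    (fun j _ => H.hs_mono (j + 1))
    (fun j hj x => by show s (j + 1) x ≤ n; have := H.hsUp (j + 1) x (by omega) (by omega); omega)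
  have eC := sum_Phi_swap W m n k (fun j => Ccv k n a s (j + 1))
    (fun j hj => H.hC_mono (j + 1) (by omega) (by omega))
    (fun j hj x => by show Ccv k n a s (j + 1) x ≤ n; exact H.hCub (j + 1) x (by omega) (by omega))
  have eD := sum_Phi_swap W m n k (fun j => Dcv k m n a s (j + 1))
    (fun j hj => H.hD_mono (j + 1) (by omega) (by omega))
    (fun j hj x => by show Dcv k m n a s (j + 1) x ≤ n; have := H.hDub (j + 1) x (by omega) (by omega); omega)
  rw [eA, eS, eC, eD, ← Finset.sum_add_distrib, ← Finset.sum_add_distrib]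
  apply Finset.sum_le_sum
  intro i hi
  rw [← Finset.sum_add_distrib, ← Finset.sum_add_distrib]
  apply Finset.sum_le_sum
  intro y _
  rw [← add_mul, ← add_mul]
  rw [Finset.mem_range] at hi
  apply mul_le_mul_of_nonneg_right _ (hW _)
  have h1 := H.Cnt_ineq i y (by omega)
  rw [Finset.sum_add_distrib] at h1
  exact h1

end SysHyp

/-- Interlacing propagates along a family. -/
lemma family_chain {m K : ℕ} {b : ℕ → ℕ → ℕ}
    (hmono : ∀ p, 1 ≤ p → p ≤ K → Monotone (b p))
    (hint : ∀ p i, 1 ≤ p → p + 1 ≤ K → i + 1 ≤ m → b p (i + 1) < b (p + 1) i) :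
    ∀ q p, 1 ≤ p → p < q → q ≤ K → ∀ i, i + 1 ≤ m → b p (i + 1) < b q i := by
  intro q
  induction q with
  | zero => omega
  | succ q' ih =>
    intro p hp hpq hqK i him
    rcases Nat.lt_or_ge p q' with h | h
    · have h1 := ih p hp h (by omega) i him
      have h2 : b q' i ≤ b q' (i + 1) := hmono q' (by omega) (by omega) (by omega)
      have h3 := hint q' i (by omega) (by omega) him
      omega
    · have : p = q' := by omega
      subst this
      exact hint p i (by omega) (by omega) him

/-- A family of pairwise interlaced profiles yields pairwise disjoint paths. -/
lemma family_disjoint {m K : ℕ} {b : ℕ → ℕ → ℕ}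
    (hmono : ∀ p, 1 ≤ p → p ≤ K → Monotone (b p))
    (hint : ∀ p i, 1 ≤ p → p + 1 ≤ K → i + 1 ≤ m → b p (i + 1) < b (p + 1) i) :
    ∀ p q, 1 ≤ p → 1 ≤ q → p ≤ K → q ≤ K → p ≠ q →
      ∀ u ∈ pathOfFrom 1 (b p) m, u ∉ pathOfFrom 1 (b q) m := by
  intro p q hp hq hpK hqK hne u hu hu'
  rcases Nat.lt_or_ge p q with h | h
  · exact disjoint_of_interlace (hmono p hp hpK) (hmono q hq hqK) m
      (fun i him => family_chain hmono hint q p hp h hqK i him) u hu hu'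
  · have h' : q < p := by omega
    exact disjoint_of_interlace (hmono q hq hqK) (hmono p hp hpK) m
      (fun i him => family_chain hmono hint p q hq h' hpK i him) u hu' hu

end LPPAux


open LPPAux in
/-- The increments `L_{k+1} - L_k` of multi-path last passage values are
nonincreasing in `k`. -/
theorem lpp_increments_nonincreasing (W : ℕ × ℕ → ℝ) (hW : ∀ v, 0 ≤ W v)
    (m n : ℕ) (L : ℕ → ℝ) (hL0 : L 0 = 0)
    (hL : ∀ k, 1 ≤ k → k ≤ min m n → IsGreatest (LPPValues W m n k) (L k)) :
    ∀ k, 1 ≤ k → k < min m n → L (k + 1) - L k ≤ L k - L (k - 1) := by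
  intro k hk1 hkm
  have hminm : min m n ≤ m := min_le_left _ _
  have hminn : min m n ≤ n := min_le_right _ _
  have hm1 : k + 1 ≤ m := by omega
  have hn1 : k + 1 ≤ n := by omega
  obtain ⟨⟨π, hπ1, hπ2, hπ3⟩, hub1⟩ := hL (k + 1) (by omega) (by omega)
  obtain ⟨-, hubk⟩ := hL k (by omega) (by omega)
  have hσmem : L (k - 1) ∈ LPPValues W m n (k - 1) := by
    rcases Nat.eq_or_lt_of_le hk1 with hk | hk
    · rw [← hk]
      show L 0 ∈ LPPValues W m n 0
      refine ⟨fun i => i.elim0, fun i => i.elim0, fun i => i.elim0, ?_⟩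
      rw [hL0]
      simp
    · exact (hL (k - 1) (by omega) (by omega)).1
  obtain ⟨σp, hσ1, hσ2, hσ3⟩ := hσmem
  -- decode the (k+1)-system
  have hdecπ : ∀ i : Fin (k + 1), ∃ b : ℕ → ℕ, Monotone b ∧ (∀ x, x < 1 → b x = i.1 + 1) ∧
      (∀ x, m ≤ x → b x = n - (k + 1) + i.1 + 1) ∧ π i = pathOfFrom 1 b m := by
    intro i
    obtain ⟨h1, h2, h3⟩ := hπ1 i
    exact decode m _ (π i) h3 1 _ (le_refl 1) h1 h2
  choose B hBmono hB0 hBm hBrep using hdecπ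
  -- decode the (k-1)-system
  have hdecσ : ∀ i : Fin (k - 1), ∃ b : ℕ → ℕ, Monotone b ∧ (∀ x, x < 1 → b x = i.1 + 1) ∧
      (∀ x, m ≤ x → b x = n - (k - 1) + i.1 + 1) ∧ σp i = pathOfFrom 1 b m := by
    intro i
    obtain ⟨h1, h2, h3⟩ := hσ1 i
    exact decode m _ (σp i) h3 1 _ (le_refl 1) h1 h2
  choose T hTmono hT0 hTm hTrep using hdecσ
  set a : ℕ → ℕ → ℕ :=
    fun p => if h : 1 ≤ p ∧ p ≤ k + 1 then B ⟨p - 1, by omega⟩ else fun _ => 0 with ha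
  set s : ℕ → ℕ → ℕ :=
    fun p => if h : 1 ≤ p ∧ p + 1 ≤ k then T ⟨p - 1, by omega⟩ else fun _ => 0 with hs
  have haB : ∀ i : Fin (k + 1), a (i.1 + 1) = B i := by
    intro i
    have hi := i.isLt
    simp only [ha]
    rw [dif_pos ⟨by omega, by omega⟩]
    congr 1
  have hsT : ∀ i : Fin (k - 1), s (i.1 + 1) = T i := by
    intro i
    have hi := i.isLt
    simp only [hs]
    rw [dif_pos ⟨by omega, by omega⟩]
    congr 1
  have haP : ∀ p (h1 : 1 ≤ p) (h2 : p ≤ k + 1), a p = B ⟨p - 1, by omega⟩ := by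
    intro p h1 h2
    simp only [ha]
    rw [dif_pos ⟨h1, h2⟩]
  have hsP : ∀ p (h1 : 1 ≤ p) (h2 : p + 1 ≤ k), s p = T ⟨p - 1, by omega⟩ := by
    intro p h1 h2
    simp only [hs]
    rw [dif_pos ⟨h1, h2⟩]
  have H : SysHyp k m n a s := by
    refine ⟨hk1, hm1, hn1, ?_, ?_, ?_, ?_, ?_, ?_, ?_, ?_⟩
    · intro p
      simp only [ha]
      split
      · exact hBmono _
      · exact monotone_const
    · intro p h1 h2
      rw [haP p h1 h2, hB0 ⟨p - 1, by omega⟩ 0 (by omega)]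
      simp
      all_goals omega
    · intro p h1 h2 x hx
      rw [haP p h1 h2, hBm ⟨p - 1, by omega⟩ x hx]
      simp
      all_goals omega
    · intro p i h1 h2 him
      have e2 : a (p + 1) = B ⟨p, by omega⟩ := by
        rw [haP (p + 1) (by omega) (by omega)]
        congr 1
      rw [haP p h1 (by omega), e2]
      apply interlace_of_disjoint (hBmono _) (hBmono _) m ?_ ?_ i him
      · rw [hB0 ⟨p - 1, by omega⟩ 0 (by omega), hB0 ⟨p, by omega⟩ 0 (by omega)]
        simp
        all_goals omega
      · intro u hu hu'
        refine hπ2 ⟨p - 1, by omega⟩ ⟨p, by omega⟩ ?_ u ?_ ?_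
        · intro hc
          rw [Fin.ext_iff] at hc
          simp at hc
          omega
        · rw [hBrep]; exact hu
        · rw [hBrep]; exact hu'
    · intro p
      simp only [hs]
      split
      · exact hTmono _
      · exact monotone_const
    · intro p h1 h2
      rw [hsP p h1 h2, hT0 ⟨p - 1, by omega⟩ 0 (by omega)]
      simp
      all_goals omega
    · intro p h1 h2 x hx
      rw [hsP p h1 h2, hTm ⟨p - 1, by omega⟩ x hx]
      simp
      all_goals omega
    · intro p i h1 h2 him
      have e2 : s (p + 1) = T ⟨p, by omega⟩ := by
        rw [hsP (p + 1) (by omega) (by omega)]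
        congr 1
      rw [hsP p h1 (by omega), e2]
      apply interlace_of_disjoint (hTmono _) (hTmono _) m ?_ ?_ i him
      · rw [hT0 ⟨p - 1, by omega⟩ 0 (by omega), hT0 ⟨p, by omega⟩ 0 (by omega)]
        simp
        all_goals omega
      · intro u hu hu'
        refine hσ2 ⟨p - 1, by omega⟩ ⟨p, by omega⟩ ?_ u ?_ ?_
        · intro hc
          rw [Fin.ext_iff] at hc
          simp at hc
          omega
        · rw [hTrep]; exact hu
        · rw [hTrep]; exact hu'
  -- the two new k-systems
  have hCpath : ∀ i : Fin k, IsUpRightPath (pathOfFrom 1 (Ccv k n a s (i.1 + 1)) m)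
      (1, i.1 + 1) (m, n - k + i.1 + 1) := by
    intro i
    have hi := i.isLt
    have h3 := isUpRightPath_pathOfFrom (m := m)
      (H.hC_mono (i.1 + 1) (by omega) (by omega)) (m - 1) 1 (le_refl 1) (by omega)
    have e1 : Ccv k n a s (i.1 + 1) (1 - 1) = i.1 + 1 := H.hC0 (i.1 + 1) (by omega) (by omega)
    have e2 : Ccv k n a s (i.1 + 1) m = n - k + i.1 + 1 := by
      rw [H.hCm (i.1 + 1) (by omega) (by omega)]
      omega
    rw [e1, e2] at h3
    exact h3
  have hDpath : ∀ i : Fin k, IsUpRightPath (pathOfFrom 1 (Dcv k m n a s (i.1 + 1)) m)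
      (1, i.1 + 1) (m, n - k + i.1 + 1) := by
    intro i
    have hi := i.isLt
    have h3 := isUpRightPath_pathOfFrom (m := m)
      (H.hD_mono (i.1 + 1) (by omega) (by omega)) (m - 1) 1 (le_refl 1) (by omega)
    have e1 : Dcv k m n a s (i.1 + 1) (1 - 1) = i.1 + 1 := H.hD0 (i.1 + 1) (by omega) (by omega)
    have e2 : Dcv k m n a s (i.1 + 1) m = n - k + i.1 + 1 := by
      rw [H.hDm (i.1 + 1) (by omega) (by omega)]
      omega
    rw [e1, e2] at h3
    exact h3
  have hCmem : (∑ j ∈ Finset.range k, Phi W m (Ccv k n a s (j + 1))) ∈ LPPValues W m n k := by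
    refine ⟨fun i => pathOfFrom 1 (Ccv k n a s (i.1 + 1)) m, hCpath, ?_, ?_⟩
    · intro i j hij
      apply family_disjoint (fun p h1 h2 => H.hC_mono p h1 h2)
        (fun p i h1 h2 him => H.hCint p i h1 h2 him) (i.1 + 1) (j.1 + 1)
        (by omega) (by omega) (by omega : i.1 + 1 ≤ k) (by omega : j.1 + 1 ≤ k)
      intro hc
      exact hij (Fin.ext (by omega))
    · rw [← Fin.sum_univ_eq_sum_range (fun j => Phi W m (Ccv k n a s (j + 1))) k]
      exact Finset.sum_congr rfl fun i _ => (sum_pathOfFrom_phi W _ m).symm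
  have hDmem : (∑ j ∈ Finset.range k, Phi W m (Dcv k m n a s (j + 1))) ∈ LPPValues W m n k := by
    refine ⟨fun i => pathOfFrom 1 (Dcv k m n a s (i.1 + 1)) m, hDpath, ?_, ?_⟩
    · intro i j hij
      apply family_disjoint (fun p h1 h2 => H.hD_mono p h1 h2)
        (fun p i h1 h2 him => H.hDint p i h1 h2 him) (i.1 + 1) (j.1 + 1)
        (by omega) (by omega) (by omega : i.1 + 1 ≤ k) (by omega : j.1 + 1 ≤ k)
      intro hc
      exact hij (Fin.ext (by omega))
    · rw [← Fin.sum_univ_eq_sum_range (fun j => Phi W m (Dcv k m n a s (j + 1))) k]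
      exact Finset.sum_congr rfl fun i _ => (sum_pathOfFrom_phi W _ m).symm
  have hxC := hubk hCmem
  have hxD := hubk hDmem
  -- old values as Phi sums
  have hLk1 : L (k + 1) = ∑ j ∈ Finset.range (k + 1), Phi W m (a (j + 1)) := by
    rw [hπ3, ← Fin.sum_univ_eq_sum_range (fun j => Phi W m (a (j + 1))) (k + 1)]
    apply Finset.sum_congr rfl
    intro i _
    rw [hBrep i, sum_pathOfFrom_phi, haB i]
  have hLk0 : L (k - 1) = ∑ j ∈ Finset.range (k - 1), Phi W m (s (j + 1)) := by
    rw [hσ3, ← Fin.sum_univ_eq_sum_range (fun j => Phi W m (s (j + 1))) (k - 1)]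
    apply Finset.sum_congr rfl
    intro i _
    rw [hTrep i, sum_pathOfFrom_phi, hsT i]
  have key := H.weight_le W hW
  rw [← hLk1, ← hLk0] at key
  linarith
end

section
/- For β > 0, the total variation distance between the geometric distribution with odds β (P(k) = β(1+β)^{−1−k} for k ≥ 0, mean 1/β) and the Poisson distribution with mean 1/β is at most c/β² for an absolute constant c (e.g., c = 2 works for all β ≥ 1). -/
set_option maxHeartbeats 1000000 in
/-- The total variation distance (half the ℓ¹ distance between probability mass
functions) between the geometric distribution with odds `β` and the Poisson
distribution with mean `1/β` is at most `2/β²` for all `β ≥ 1`. -/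
theorem geometric_poisson_tv_bound (β : ℝ) (hβ : 1 ≤ β) :
    (1 / 2) * ∑' k : ℕ,
        |β / (1 + β) ^ (k + 1) - Real.exp (-(1 / β)) * (1 / β) ^ k / (Nat.factorial k)| ≤
      2 / β ^ 2 := by
  have hβ0 : (0:ℝ) < β := lt_of_lt_of_le one_pos hβ
  have h1β : (0:ℝ) < 1 + β := by linarith
  set E : ℝ := Real.exp (-(1 / β)) with hE
  have hEpos : 0 < E := Real.exp_pos _
  set f : ℕ → ℝ := fun k => β / (1 + β) ^ (k + 1) with hf
  set p : ℕ → ℝ := fun k => E * (1 / β) ^ k / (Nat.factorial k) with hp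
  set a : ℕ → ℝ := fun k => |β / (1 + β) ^ (k + 1) - E * (1 / β) ^ k / (Nat.factorial k)|
    with ha
  have ha' : ∀ k, a k = |f k - p k| := fun k => rfl
  -- summability
  have hr0 : (0:ℝ) ≤ (1 + β)⁻¹ := by positivity
  have hr1 : (1 + β)⁻¹ < 1 := by
    rw [inv_lt_one_iff₀]; right; linarith
  have hgeo : Summable (fun k : ℕ => ((1 + β)⁻¹) ^ k) :=
    summable_geometric_of_lt_one hr0 hr1
  have hfs : Summable f := by
    have : f = fun k => (β / (1 + β)) * ((1 + β)⁻¹) ^ k := by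
      funext k
      simp only [hf]
      rw [inv_pow, ← one_div, div_mul_div_comm, mul_one, ← pow_succ']
    rw [this]
    exact hgeo.mul_left _
  have hps : Summable p := by
    have : p = fun k => E * ((1 / β) ^ k / (Nat.factorial k)) := by
      funext k; simp only [hp]; ring
    rw [this]
    exact (Real.summable_pow_div_factorial _).mul_left _
  have has : Summable a := by
    have : a = fun k => |f k - p k| := rfl
    rw [this]; exact (hfs.sub hps).abs
  -- split off first two terms
  have e1 : ∑' k, a k = a 0 + ∑' k, a (k + 1) := Summable.tsum_eq_zero_add has
  have has1 : Summable (fun k => a (k + 1)) := (summable_nat_add_iff 1).2 has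
  have e2 : ∑' k, a (k + 1) = a 1 + ∑' k, a (k + 2) := Summable.tsum_eq_zero_add has1
  -- geometric tail
  have hfs2 : Summable (fun k => f (k + 2)) := (summable_nat_add_iff 2).2 hfs
  have hps2 : Summable (fun k => p (k + 2)) := (summable_nat_add_iff 2).2 hps
  have hTg : ∑' k, f (k + 2) = 1 / (1 + β) ^ 2 := by
    have hrw : (fun k : ℕ => f (k + 2)) = fun k => (β / (1 + β) ^ 3) * ((1 + β)⁻¹) ^ k := by
      funext k
      simp only [hf]
      rw [show k + 2 + 1 = 3 + k by omega]
      rw [inv_pow, ← one_div, div_mul_div_comm, mul_one, ← pow_add]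
    rw [hrw, tsum_mul_left, tsum_geometric_of_lt_one hr0 hr1]
    rw [show (1:ℝ) - (1 + β)⁻¹ = β / (1 + β) by field_simp; ring]
    field_simp
  -- Poisson tail
  have hexp_tsum : ∑' k : ℕ, (1 / β) ^ k / (Nat.factorial k) = Real.exp (1 / β) := by
    rw [Real.exp_eq_exp_ℝ, NormedSpace.exp_eq_tsum_div]
  have hterm : ∀ k : ℕ,
      p (k + 2) ≤ (1 / (2 * β ^ 2)) * (E * ((1 / β) ^ k / (Nat.factorial k))) := by
    intro k
    have hfac : ((Nat.factorial (k + 2) : ℝ)) = ((k:ℝ) + 2) * ((k:ℝ) + 1) * (Nat.factorial k) := by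
      push_cast [Nat.factorial_succ]
      ring
    have hkf : (0:ℝ) < (Nat.factorial k) := by exact_mod_cast Nat.factorial_pos k
    have heq : (1 / (2 * β ^ 2)) * (E * ((1 / β) ^ k / (Nat.factorial k)))
        = E * (1 / β) ^ (k + 2) / (2 * (Nat.factorial k)) := by
      rw [pow_add]
      field_simp
    simp only [hp]
    rw [hfac, heq]
    gcongr
    nlinarith [mul_nonneg (by positivity : (0:ℝ) ≤ (k:ℝ)^2 + 3*(k:ℝ)) hkf.le]
  have hps2' : Summable (fun k : ℕ => (1 / (2 * β ^ 2)) * (E * ((1 / β) ^ k / (Nat.factorial k)))) :=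
    ((Real.summable_pow_div_factorial _).mul_left E).mul_left _
  have hTp : ∑' k, p (k + 2) ≤ 1 / (2 * β ^ 2) := by
    calc ∑' k, p (k + 2)
        ≤ ∑' k : ℕ, (1 / (2 * β ^ 2)) * (E * ((1 / β) ^ k / (Nat.factorial k))) :=
          Summable.tsum_le_tsum hterm hps2 hps2'
      _ = (1 / (2 * β ^ 2)) * (E * Real.exp (1 / β)) := by
          rw [tsum_mul_left, tsum_mul_left, hexp_tsum]
      _ = 1 / (2 * β ^ 2) := by
          rw [hE, ← Real.exp_add]
          norm_num
  -- tail bound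
  have htail : ∑' k, a (k + 2) ≤ 1 / (1 + β) ^ 2 + 1 / (2 * β ^ 2) := by
    have hb : ∀ k : ℕ, a (k + 2) ≤ f (k + 2) + p (k + 2) := by
      intro k
      have hf0 : 0 ≤ f (k + 2) := by simp only [hf]; positivity
      have hp0 : 0 ≤ p (k + 2) := by simp only [hp]; positivity
      rw [ha' (k + 2)]
      calc |f (k + 2) - p (k + 2)| ≤ |f (k + 2)| + |p (k + 2)| := abs_sub _ _
        _ = f (k + 2) + p (k + 2) := by rw [abs_of_nonneg hf0, abs_of_nonneg hp0]
    calc ∑' k, a (k + 2) ≤ ∑' k, (f (k + 2) + p (k + 2)) :=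
          Summable.tsum_le_tsum hb ((summable_nat_add_iff 2).2 has) (hfs2.add hps2)
      _ = (∑' k, f (k + 2)) + ∑' k, p (k + 2) := Summable.tsum_add hfs2 hps2
      _ ≤ 1 / (1 + β) ^ 2 + 1 / (2 * β ^ 2) := by rw [hTg]; linarith [hTp]
  -- exponential inequalities
  have hE1 : 1 - 1 / β ≤ E := by
    have h := Real.add_one_le_exp (-(1 / β))
    rw [hE]; linarith
  have hE2 : E ≤ β / (1 + β) := by
    have h := Real.add_one_le_exp (1 / β)
    have hgt : (0:ℝ) < (1 + β) / β := by positivity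
    have h2 : (1 + β) / β ≤ Real.exp (1 / β) := by
      rw [add_div]
      have : β / β = 1 := div_self (ne_of_gt hβ0)
      linarith [this ▸ h]
    have h3 := one_div_le_one_div_of_le hgt h2
    rw [hE, Real.exp_neg]
    calc (Real.exp (1 / β))⁻¹ = 1 / Real.exp (1 / β) := (one_div _).symm
      _ ≤ 1 / ((1 + β) / β) := h3
      _ = β / (1 + β) := by rw [one_div_div]
  have hinvsq : (0:ℝ) < 1 / β ^ 2 := by positivity
  have h7 : 1 / (1 + β) ^ 2 ≤ 1 / β ^ 2 := by
    rw [div_le_div_iff₀ (by positivity) (by positivity)]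
    nlinarith
  -- head terms
  have ha0 : a 0 ≤ 1 / β ^ 2 := by
    have h0 : a 0 = |β / (1 + β) - E| := by
      simp only [ha]
      norm_num
    rw [h0, abs_le]
    constructor
    · linarith [hE2]
    · have hk1 : β / (1 + β) - (1 - 1 / β) = 1 / (β * (1 + β)) := by
        field_simp
        ring
      have hk2 : 1 / (β * (1 + β)) ≤ 1 / β ^ 2 := by
        rw [div_le_div_iff₀ (by positivity) (by positivity)]
        nlinarith
      linarith [hE1]
  have ha1 : a 1 ≤ 1 / β ^ 2 := by
    have h0 : a 1 = |β / (1 + β) ^ 2 - E * (1 / β)| := by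
      simp only [ha]
      norm_num
    rw [h0, abs_le]
    constructor
    · -- E * (1/β) - β/(1+β)^2 ≤ 1/β^2
      have h5 : E * (1 / β) ≤ (β / (1 + β)) * (1 / β) :=
        mul_le_mul_of_nonneg_right hE2 (by positivity)
      have h5' : (β / (1 + β)) * (1 / β) = 1 / (1 + β) := by
        field_simp
      have h6 : 1 / (1 + β) - β / (1 + β) ^ 2 = 1 / (1 + β) ^ 2 := by
        field_simp
        ring
      linarith
    · -- β/(1+β)^2 - E * (1/β) ≤ 1/β^2
      have h5 : (1 - 1 / β) * (1 / β) ≤ E * (1 / β) :=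
        mul_le_mul_of_nonneg_right hE1 (by positivity)
      have h5' : (1 - 1 / β) * (1 / β) = 1 / β - 1 / β ^ 2 := by
        field_simp
      have hq : β / (1 + β) ^ 2 ≤ 1 / β := by
        rw [div_le_div_iff₀ (by positivity) hβ0]
        nlinarith
      linarith
  -- assemble
  have hsum_le : ∑' k, a k ≤ 4 / β ^ 2 := by
    rw [e1, e2]
    have hx1 : 4 / β ^ 2 = 4 * (1 / β ^ 2) := by ring
    have hx2 : 1 / (2 * β ^ 2) = (1 / 2) * (1 / β ^ 2) := by ring
    linarith [ha0, ha1, htail, h7]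
  calc (1 / 2) * ∑' k, a k ≤ (1 / 2) * (4 / β ^ 2) := by linarith [hsum_le]
    _ = 2 / β ^ 2 := by ring
end

section
/- Let α, β > 0 with αβ > 1, δ = (√(αβ)−1)/(√(αβ)+β), γ̃ = (√(αβ)−1)²/(1+β), and L(w) = log(1−w) + α log(w + β⁻¹) − γ̃ log w. Then L‴(δ) = −2(α + 1 − γ̃)/(δ(δ+β⁻¹)(1−δ)) < 0. -/
open Real Filter Set

private lemma aux_d1 (α γ' b x : ℝ) (hx0 : x ≠ 0) (hx1 : (1:ℝ) - x ≠ 0) (hxb : x + b ≠ 0) :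
    HasDerivAt (fun w => Real.log (1 - w) + α * Real.log (w + b) - γ' * Real.log w)
      (-(1 - x)⁻¹ + α * (x + b)⁻¹ - γ' * x⁻¹) x := by
  have h1 : HasDerivAt (fun w : ℝ => Real.log (1 - w)) (-(1 - x)⁻¹) x := by
    have := (((hasDerivAt_id x).const_sub 1).log hx1)
    refine this.congr_deriv ?_
    simp only [id_eq, Pi.pow_apply]
    field_simp
  have h2 : HasDerivAt (fun w : ℝ => α * Real.log (w + b)) (α * (x + b)⁻¹) x := by
    have := (((hasDerivAt_id x).add_const b).log hxb).const_mul α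
    refine this.congr_deriv ?_
    simp only [id_eq, Pi.pow_apply]
    field_simp
  have h3 : HasDerivAt (fun w : ℝ => γ' * Real.log w) (γ' * x⁻¹) x :=
    (Real.hasDerivAt_log hx0).const_mul γ'
  exact (h1.add h2).sub h3

private lemma aux_d2 (α γ' b x : ℝ) (hx0 : x ≠ 0) (hx1 : (1:ℝ) - x ≠ 0) (hxb : x + b ≠ 0) :
    HasDerivAt (fun w : ℝ => -(1 - w)⁻¹ + α * (w + b)⁻¹ - γ' * w⁻¹)
      (-((1 - x) ^ 2)⁻¹ - α * ((x + b) ^ 2)⁻¹ + γ' * (x ^ 2)⁻¹) x := by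
  have h1 : HasDerivAt (fun w : ℝ => -(1 - w)⁻¹) (-((1 - x) ^ 2)⁻¹) x := by
    have := (((hasDerivAt_id x).const_sub 1).inv hx1).neg
    refine this.congr_deriv ?_
    simp only [id_eq, Pi.pow_apply]
    field_simp
  have h2 : HasDerivAt (fun w : ℝ => α * (w + b)⁻¹) (-(α * ((x + b) ^ 2)⁻¹)) x := by
    have := (((hasDerivAt_id x).add_const b).inv hxb).const_mul α
    refine this.congr_deriv ?_
    simp only [id_eq, Pi.pow_apply]
    field_simp
  have h3 : HasDerivAt (fun w : ℝ => γ' * w⁻¹) (-(γ' * (x ^ 2)⁻¹)) x := by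
    have := ((hasDerivAt_id x).inv hx0).const_mul γ'
    refine this.congr_deriv ?_
    simp only [id_eq, Pi.pow_apply]
    field_simp
  have := (h1.add h2).sub h3
  refine this.congr_deriv ?_
  ring

private lemma aux_d3 (α γ' b x : ℝ) (hx0 : x ≠ 0) (hx1 : (1:ℝ) - x ≠ 0) (hxb : x + b ≠ 0) :
    HasDerivAt (fun w : ℝ => -((1 - w) ^ 2)⁻¹ - α * ((w + b) ^ 2)⁻¹ + γ' * (w ^ 2)⁻¹)
      (-2 * ((1 - x) ^ 3)⁻¹ + 2 * α * ((x + b) ^ 3)⁻¹ - 2 * γ' * (x ^ 3)⁻¹) x := by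
  have h1 : HasDerivAt (fun w : ℝ => -((1 - w) ^ 2)⁻¹) (-2 * ((1 - x) ^ 3)⁻¹) x := by
    have := ((((hasDerivAt_id x).const_sub 1).pow 2).inv (pow_ne_zero 2 hx1)).neg
    refine this.congr_deriv ?_
    simp only [id_eq, Pi.pow_apply]
    field_simp
    ring
  have h2 : HasDerivAt (fun w : ℝ => α * ((w + b) ^ 2)⁻¹) (-(2 * α * ((x + b) ^ 3)⁻¹)) x := by
    have := ((((hasDerivAt_id x).add_const b).pow 2).inv (pow_ne_zero 2 hxb)).const_mul α
    refine this.congr_deriv ?_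
    simp only [id_eq, Pi.pow_apply]
    field_simp
    ring
  have h3 : HasDerivAt (fun w : ℝ => γ' * (w ^ 2)⁻¹) (-(2 * γ' * (x ^ 3)⁻¹)) x := by
    have := (((hasDerivAt_id x).pow 2).inv (pow_ne_zero 2 hx0)).const_mul γ'
    refine this.congr_deriv ?_
    simp only [id_eq, Pi.pow_apply]
    field_simp
    ring
  have := (h1.sub h2).add h3
  refine this.congr_deriv ?_
  ring

/-- The third derivative of `L` at the double critical point `δ` equals
`-2(α+1-γ̃)/(δ(δ+β⁻¹)(1-δ))`, which is negative. -/
theorem third_deriv_formula (α β : ℝ) (hα : 0 < α) (hβ : 0 < β) (hαβ : 1 < α * β)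
    (δ γ' : ℝ) (hδ : δ = (Real.sqrt (α * β) - 1) / (Real.sqrt (α * β) + β))
    (hγ : γ' = (Real.sqrt (α * β) - 1) ^ 2 / (1 + β))
    (L : ℝ → ℝ)
    (hL : ∀ w ∈ Set.Ioo (0 : ℝ) 1,
      L w = Real.log (1 - w) + α * Real.log (w + β⁻¹) - γ' * Real.log w) :
    iteratedDeriv 3 L δ = -2 * (α + 1 - γ') / (δ * (δ + β⁻¹) * (1 - δ)) ∧
      iteratedDeriv 3 L δ < 0 := by
  set s := Real.sqrt (α * β) with hs_def
  have hs2 : s ^ 2 = α * β := Real.sq_sqrt (by positivity)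
  have hs0 : 0 ≤ s := Real.sqrt_nonneg _
  have hs1 : 1 < s := by nlinarith
  have hsβ : (0:ℝ) < s + β := by linarith
  have h1β : (0:ℝ) < 1 + β := by linarith
  have hδ0 : 0 < δ := by rw [hδ]; exact div_pos (by linarith) hsβ
  have hδ1 : δ < 1 := by rw [hδ, div_lt_one hsβ]; linarith
  have hβi : (0:ℝ) < β⁻¹ := inv_pos.mpr hβ
  have hαs : α = s ^ 2 / β := by field_simp [hβ.ne']; linarith
  -- the third derivative via eventual equality
  have hmem : Ioo (0:ℝ) 1 ∈ nhds δ := isOpen_Ioo.mem_nhds ⟨hδ0, hδ1⟩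
  have hne : ∀ x ∈ Ioo (0:ℝ) 1, x ≠ 0 ∧ (1:ℝ) - x ≠ 0 ∧ x + β⁻¹ ≠ 0 := by
    rintro x ⟨h1, h2⟩
    exact ⟨ne_of_gt h1, by linarith, by positivity⟩
  have hD3 : iteratedDeriv 3 L δ =
      -2 * ((1 - δ) ^ 3)⁻¹ + 2 * α * ((δ + β⁻¹) ^ 3)⁻¹ - 2 * γ' * (δ ^ 3)⁻¹ := by
    have ev0 : L =ᶠ[nhds δ]
        fun w => Real.log (1 - w) + α * Real.log (w + β⁻¹) - γ' * Real.log w :=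
      eventually_of_mem hmem hL
    have ev1 : deriv L =ᶠ[nhds δ] fun w : ℝ => -(1 - w)⁻¹ + α * (w + β⁻¹)⁻¹ - γ' * w⁻¹ := by
      refine ev0.deriv.trans (eventually_of_mem hmem fun x hx => ?_)
      obtain ⟨h1, h2, h3⟩ := hne x hx
      exact (aux_d1 α γ' β⁻¹ x h1 h2 h3).deriv
    have ev2 : deriv (deriv L) =ᶠ[nhds δ]
        fun w : ℝ => -((1 - w) ^ 2)⁻¹ - α * ((w + β⁻¹) ^ 2)⁻¹ + γ' * (w ^ 2)⁻¹ := by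
      refine ev1.deriv.trans (eventually_of_mem hmem fun x hx => ?_)
      obtain ⟨h1, h2, h3⟩ := hne x hx
      exact (aux_d2 α γ' β⁻¹ x h1 h2 h3).deriv
    have ev3 : deriv (deriv (deriv L)) δ =
        -2 * ((1 - δ) ^ 3)⁻¹ + 2 * α * ((δ + β⁻¹) ^ 3)⁻¹ - 2 * γ' * (δ ^ 3)⁻¹ := by
      obtain ⟨h1, h2, h3⟩ := hne δ ⟨hδ0, hδ1⟩
      rw [ev2.deriv.self_of_nhds]
      exact (aux_d3 α γ' β⁻¹ δ h1 h2 h3).deriv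
    rw [show (3:ℕ) = 2 + 1 from rfl, iteratedDeriv_succ, show (2:ℕ) = 1 + 1 from rfl,
      iteratedDeriv_succ, iteratedDeriv_one]
    exact ev3
  -- the algebraic identity
  have hkey : iteratedDeriv 3 L δ = -2 * (α + 1 - γ') / (δ * (δ + β⁻¹) * (1 - δ)) := by
    rw [hD3]
    have e1 : 1 - δ = (1 + β) / (s + β) := by rw [hδ]; field_simp; ring
    have e2 : δ + β⁻¹ = s * (1 + β) / (β * (s + β)) := by rw [hδ]; field_simp; ring
    rw [e1, e2, hδ, hγ, hαs]
    have h1 : s - 1 ≠ 0 := by linarith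
    have h2 : s ≠ 0 := by linarith
    field_simp
    ring
  refine ⟨hkey, ?_⟩
  rw [hkey]
  have hnum : α + 1 - γ' = (s + β) ^ 2 / (β * (1 + β)) := by
    rw [hγ, hαs]; field_simp; ring
  apply div_neg_of_neg_of_pos
  · rw [hnum]
    have : (0:ℝ) < (s + β) ^ 2 / (β * (1 + β)) := by positivity
    nlinarith
  · have : (0:ℝ) < δ + β⁻¹ := by positivity
    have : (0:ℝ) < 1 - δ := by linarith
    positivity
end
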